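/- arXiv:2309.15201 — 5 statements merged into one kernel-verified Lean document; each statement's English description precedes it below -/
import Mathlib

section
/- Let s ≥ 2 and t ≥ 2 be integers and let M ⊆ V(P_s □ P_t). Suppose M satisfies all of the following conditions: (i) |M ∩ P_s^i| ≤ 2 and |M ∩ ^jP_t| ≤ 2 for every i ∈ {0,...,t-1} and j ∈ {0,...,s-1}; (ii) if M ∩ P_s^i = {u,v} and M ∩ P_s^j = {w,z} for some i,j ∈ {0,...,t-1}, then [u_x,v_x] ∩ [w_x,z_x] ≠ ∅; (iii) if M ∩ ^iP_t = {u,v} and M ∩ ^jP_t = {w,z} for some i,j ∈ {0,...,s-1}, then [u_y,v_y] ∩ [w_y,z_y] ≠ ∅; (iv) d(u,v) ≥ 3 for every pair of distinct vertices u,v ∈ M. Then M is a mutual-visibility set of P_s □ P_t. -/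
open SimpleGraph

/-- `M` is a mutual-visibility set of `G`: any two vertices of `M` are joined by a
shortest path containing no other vertex of `M`. -/
def IsMutualVisibilitySet {V : Type*} (G : SimpleGraph V) (M : Set V) : Prop :=
  ∀ u ∈ M, ∀ v ∈ M, ∃ p : G.Walk u v, p.IsPath ∧ p.length = G.dist u v ∧
    ∀ w ∈ p.support, w ∈ M → w = u ∨ w = v

/-- The mutual-visibility number of `G`: the maximum cardinality of a
mutual-visibility set of `G`. -/
noncomputable def mutualVisibilityNumber {V : Type*} (G : SimpleGraph V) : ℕ :=
  sSup {n : ℕ | ∃ M : Set V, IsMutualVisibilitySet G M ∧ M.ncard = n}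

/-- The interval `I(u,v)`: the set of vertices lying on shortest `u,v`-paths of `G`. -/
def gInterval {V : Type*} (G : SimpleGraph V) (u v : V) : Set V :=
  {w | ∃ p : G.Walk u v, p.IsPath ∧ p.length = G.dist u v ∧ w ∈ p.support}

/-- The cyclic distance `|n-k|_t = min(|n-k|, t-|n-k|)` on `{0,…,t-1}`. -/
def cycDist (t : ℕ) (k n : Fin t) : ℕ :=
  min (Nat.dist k.val n.val) (t - Nat.dist k.val n.val)

/-- The cyclic interval `[k,n]_t` on `{0,…,t-1}`. -/
def cycInterval (t : ℕ) (k n : Fin t) : Set (Fin t) :=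
  if 2 * cycDist t k n < t then {m : Fin t | m.val ∈ Set.uIcc k.val n.val}
  else if 2 * cycDist t k n = t then Set.univ
  else {m : Fin t | m.val ∉ Set.uIcc k.val n.val} ∪ {k, n}

/-!
For `u, v ∈ M` the shortest `u,v`-paths of `P_s □ P_t` are the monotone lattice paths in the box
spanned by `u` and `v`. Identify that box with `[0, X] × [0, Y]`, with `u` at the origin and `v` at
`(X, Y)`, and call the other points of `M` in it obstacles. By (iv) no two obstacles are diagonal
neighbours, so a monotone path can only get stuck on the top row or in the last column.
The path that climbs whenever it can is pushed to the right only by obstacles that rise strictly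
from column to column, starting in the column of `u`; by (i) and (iii) for the columns of `u` and
`v` it therefore reaches the top row. Symmetrically, by (i) and (ii) for the rows of `u` and `v`,
an obstacle-free path runs from the left edge to `(X, Y)`. These two paths cross, and splicing them
where they meet gives a shortest `u,v`-path avoiding the rest of `M`.
-/

def LatticeStep (p q : ℕ × ℕ) : Prop :=
  q = (p.1 + 1, p.2) ∨ q = (p.1, p.2 + 1)

def IsLatticePath (η : ℕ → ℕ × ℕ) (a b : ℕ) : Prop :=
  ∀ i, a ≤ i → i < b → LatticeStep (η i) (η (i + 1))

namespace LatticeStep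

variable {p q : ℕ × ℕ}

theorem fst_add_snd (h : LatticeStep p q) : q.1 + q.2 = p.1 + p.2 + 1 := by
  rcases h with rfl | rfl <;> simp only <;> omega

theorem le (h : LatticeStep p q) : p ≤ q := by
  rcases h with rfl | rfl
  exacts [⟨Nat.le_succ _, le_rfl⟩, ⟨le_rfl, Nat.le_succ _⟩]

theorem fst_le_succ (h : LatticeStep p q) : q.1 ≤ p.1 + 1 := by
  rcases h with rfl | rfl <;> simp

end LatticeStep

namespace IsLatticePath

variable {η f g : ℕ → ℕ × ℕ} {a b : ℕ}

theorem mono (h : IsLatticePath η a b) {a' b' : ℕ} (ha : a ≤ a') (hb : b' ≤ b) :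
    IsLatticePath η a' b' :=
  fun i hai hib => h i (ha.trans hai) (hib.trans_le hb)

theorem apply_le_apply (h : IsLatticePath η a b) {i j : ℕ} (hai : a ≤ i) (hij : i ≤ j)
    (hjb : j ≤ b) : η i ≤ η j := by
  induction j, hij using Nat.le_induction with
  | base => exact le_rfl
  | succ j hij ih => exact (ih (by omega)).trans (h j (hai.trans hij) hjb).le

theorem fst_add_snd (h : IsLatticePath η a b) {i : ℕ} (hai : a ≤ i) (hib : i ≤ b) :
    (η i).1 + (η i).2 = (η a).1 + (η a).2 + (i - a) := by
  induction i, hai using Nat.le_induction with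
  | base => simp
  | succ i hai ih =>
    have := (h i hai hib).fst_add_snd
    have := ih (by omega)
    omega

/-- The gap between the first coordinates changes by at most one per step, so it cannot change
sign without vanishing. -/
theorem exists_eq_of_cross (hf : IsLatticePath f a b) (hg : IsLatticePath g a b) (hab : a ≤ b)
    (hlevel : (f a).1 + (f a).2 = (g a).1 + (g a).2) (ha : (g a).1 ≤ (f a).1)
    (hb : (f b).1 ≤ (g b).1) : ∃ l, a ≤ l ∧ l ≤ b ∧ f l = g l := by
  obtain ⟨d, rfl⟩ := Nat.exists_eq_add_of_le hab
  clear hab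
  induction d generalizing a with
  | zero =>
    simp only [Nat.add_zero] at hb
    exact ⟨a, le_rfl, le_rfl, Prod.ext (by omega) (by omega)⟩
  | succ d ih =>
    by_cases heq : (g a).1 = (f a).1
    · exact ⟨a, le_rfl, by omega, Prod.ext heq.symm (by omega)⟩
    have hfs := hf a le_rfl (by omega)
    have hgs := hg a le_rfl (by omega)
    have hf_level := hfs.fst_add_snd
    have hg_level := hgs.fst_add_snd
    have hf_fst := hfs.le.1
    have hg_fst := hgs.fst_le_succ
    rw [show a + (d + 1) = a + 1 + d by omega] at hf hg hb
    obtain ⟨l, hal, hlb, hl⟩ :=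
      ih (by omega) (by omega) (hf.mono (by omega) le_rfl) (hg.mono (by omega) le_rfl) hb
    exact ⟨l, by omega, by omega, hl⟩

theorem splice {l : ℕ} (hf : IsLatticePath f a l) (hg : IsLatticePath g l b) (h : f l = g l) :
    IsLatticePath (fun i => if i ≤ l then f i else g i) a b := by
  intro i hai hib
  by_cases hil : i < l
  · simpa [hil.le, Nat.succ_le_of_lt hil] using hf i hai hil
  · simp only [show ¬ i + 1 ≤ l by omega, if_false]
    by_cases hil' : i = l
    · subst hil'
      simpa [h] using hg i le_rfl hib
    · simpa [show ¬ i ≤ l by omega] using hg i (by omega) hib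

end IsLatticePath

open Classical in
noncomputable def upGreedy (O : Set (ℕ × ℕ)) (Y : ℕ) : ℕ → ℕ × ℕ
  | 0 => (0, 0)
  | i + 1 =>
    let p := upGreedy O Y i
    if p.2 < Y ∧ (p.1, p.2 + 1) ∉ O then (p.1, p.2 + 1) else (p.1 + 1, p.2)

/-- The reflection of `[0, Y] × [0, X]` onto `[0, X] × [0, Y]` in the antidiagonal. -/
def antidiagReflect (X Y : ℕ) (p : ℕ × ℕ) : ℕ × ℕ := (X - p.2, Y - p.1)

theorem LatticeStep.antidiagReflect {X Y : ℕ} {p q : ℕ × ℕ} (h : LatticeStep p q)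
    (hq : q ≤ (Y, X)) : LatticeStep (antidiagReflect X Y q) (antidiagReflect X Y p) := by
  obtain ⟨hq₁, hq₂⟩ := hq
  unfold LatticeStep _root_.antidiagReflect
  rcases h with rfl | rfl
  · exact Or.inr (Prod.ext rfl (by simp at hq₁ ⊢; omega))
  · exact Or.inl (Prod.ext (by simp at hq₂ ⊢; omega) rfl)

section LatticePaths

variable {O : Set (ℕ × ℕ)} {X Y : ℕ}

theorem upGreedy_succ_of_notMem {i : ℕ} (hY : (upGreedy O Y i).2 < Y)
    (hO : ((upGreedy O Y i).1, (upGreedy O Y i).2 + 1) ∉ O) :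
    upGreedy O Y (i + 1) = ((upGreedy O Y i).1, (upGreedy O Y i).2 + 1) := by
  simp [upGreedy, hY, hO]

theorem upGreedy_succ_of_mem {i : ℕ} (hO : ((upGreedy O Y i).1, (upGreedy O Y i).2 + 1) ∈ O) :
    upGreedy O Y (i + 1) = ((upGreedy O Y i).1 + 1, (upGreedy O Y i).2) := by
  simp [upGreedy, hO]

theorem isLatticePath_upGreedy (O : Set (ℕ × ℕ)) (Y a b : ℕ) :
    IsLatticePath (upGreedy O Y) a b := by
  intro i _ _
  by_cases h : (upGreedy O Y i).2 < Y ∧ ((upGreedy O Y i).1, (upGreedy O Y i).2 + 1) ∉ O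
  · exact Or.inr (upGreedy_succ_of_notMem h.1 h.2)
  · simp only [LatticeStep, upGreedy, if_neg h, true_or]

theorem upGreedy_fst_add_snd (O : Set (ℕ × ℕ)) (Y i : ℕ) :
    (upGreedy O Y i).1 + (upGreedy O Y i).2 = i := by
  simpa [upGreedy] using (isLatticePath_upGreedy O Y 0 i).fst_add_snd (Nat.zero_le i) le_rfl

/-- Each time the path is pushed right out of a column `x` by an obstacle `(x, z)`, the next such
obstacle lies at least two rows higher, by `hO`; the first one is an obstacle `(0, c)`. So the path
could only be stuck in column `X` below an obstacle higher than `c`, which `hcol` excludes. -/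
theorem upGreedy_invariant (hO : O.Pairwise fun p q => 3 ≤ p.1.dist q.1 + p.2.dist q.2)
    (hcol : ∀ c b, (0, c) ∈ O → (X, b) ∈ O → 0 < X ∧ b ≤ c) (h0 : (0, 0) ∉ O) (i : ℕ)
    (hbelow : ∀ j < i, (upGreedy O Y j).2 ≠ Y) :
    upGreedy O Y i ∉ O ∧ (upGreedy O Y i).1 ≤ X ∧ (upGreedy O Y i).2 ≤ Y ∧
      (0 < (upGreedy O Y i).1 → ∃ c z, (0, c) ∈ O ∧ ((upGreedy O Y i).1 - 1, z) ∈ O ∧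
        c ≤ z ∧ z ≤ (upGreedy O Y i).2 + 1) := by
  induction i with
  | zero => simp [upGreedy, h0]
  | succ i ih =>
    obtain ⟨-, hx, hy, hchain⟩ := ih fun j hj => hbelow j (by omega)
    have hyY : (upGreedy O Y i).2 < Y := lt_of_le_of_ne hy (hbelow i (by omega))
    generalize hp : upGreedy O Y i = p at hx hy hyY hchain
    obtain ⟨x, y⟩ := p
    by_cases hup : (x, y + 1) ∈ O
    · rw [upGreedy_succ_of_mem (by rwa [hp]), hp]
      have hfree : (x + 1, y) ∉ O := fun h => by
        have := hO h hup (by simp)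
        simp only [Nat.dist] at this
        omega
      have hxX : x < X := by
        by_contra hX
        obtain rfl : x = X := by omega
        rcases Nat.eq_zero_or_pos x with rfl | hxpos
        · exact (hcol _ _ hup hup).1.false
        · obtain ⟨c, z, hc, hz, hcz, hzy⟩ := hchain hxpos
          have hsep := hO hz hup (by simp; omega)
          have := hcol c _ hc hup
          simp only [Nat.dist] at hsep
          omega
      refine ⟨hfree, hxX, hy, fun _ => ?_⟩
      rcases Nat.eq_zero_or_pos x with rfl | hxpos
      · exact ⟨y + 1, y + 1, hup, hup, le_rfl, le_rfl⟩
      · obtain ⟨c, z, hc, -, hcz, hzy⟩ := hchain hxpos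
        exact ⟨c, y + 1, hc, by simpa using hup, by omega, le_rfl⟩
    · rw [upGreedy_succ_of_notMem (by rwa [hp]) (by rwa [hp]), hp]
      refine ⟨hup, hx, hyY, fun hxpos => ?_⟩
      obtain ⟨c, z, hc, hz, hcz, hzy⟩ := hchain hxpos
      exact ⟨c, z, hc, hz, hcz, by omega⟩

theorem exists_upGreedy_eq_top (hO : O.Pairwise fun p q => 3 ≤ p.1.dist q.1 + p.2.dist q.2)
    (hcol : ∀ c b, (0, c) ∈ O → (X, b) ∈ O → 0 < X ∧ b ≤ c) (h0 : (0, 0) ∉ O) :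
    ∃ k ≤ X, upGreedy O Y (k + Y) = (k, Y) ∧ ∀ i ≤ k + Y, upGreedy O Y i ∉ O := by
  have htop : ∃ n, (upGreedy O Y n).2 = Y := by
    by_contra! hne
    obtain ⟨-, hx, hy, -⟩ := upGreedy_invariant hO hcol h0 (X + Y + 1) fun j _ => hne j
    have := upGreedy_fst_add_snd O Y (X + Y + 1)
    omega
  set n := Nat.find htop
  have hinv (i : ℕ) (hi : i ≤ n) := upGreedy_invariant hO hcol h0 i fun j hj =>
    Nat.find_min htop (by omega)
  have hn := upGreedy_fst_add_snd O Y n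
  have hnY : (upGreedy O Y n).2 = Y := Nat.find_spec htop
  refine ⟨(upGreedy O Y n).1, (hinv n le_rfl).2.1, ?_, fun i hi => (hinv i (by omega)).1⟩
  rw [show (upGreedy O Y n).1 + Y = n by omega]
  exact Prod.ext rfl hnY

/-- The climbing greedy path of the picture reflected in the antidiagonal, read backwards. -/
theorem exists_latticePath_from_left_edge
    (hO : O.Pairwise fun p q => 3 ≤ p.1.dist q.1 + p.2.dist q.2)
    (hrow : ∀ a d, (a, 0) ∈ O → (d, Y) ∈ O → 0 < Y ∧ d ≤ a) (hXY : (X, Y) ∉ O) :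
    ∃ r ≤ Y, ∃ g : ℕ → ℕ × ℕ, g r = (0, r) ∧ g (X + Y) = (X, Y) ∧ IsLatticePath g r (X + Y) ∧
      ∀ j, r ≤ j → j ≤ X + Y → g j ∉ O := by
  set σ := antidiagReflect X Y
  set O' := {p : ℕ × ℕ | p ≤ (Y, X) ∧ σ p ∈ O}
  have hO' : O'.Pairwise fun p q => 3 ≤ p.1.dist q.1 + p.2.dist q.2 := by
    rintro p ⟨⟨hp₁, hp₂⟩, hp⟩ q ⟨⟨hq₁, hq₂⟩, hq⟩ hpq
    have hne : σ p ≠ σ q := fun h => hpq <| by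
      simp only [σ, antidiagReflect, Prod.mk.injEq] at h hp₁ hp₂ hq₁ hq₂
      exact Prod.ext (by omega) (by omega)
    have := hO hp hq hne
    simp only [σ, antidiagReflect, Nat.dist] at this hp₁ hp₂ hq₁ hq₂ ⊢
    omega
  have hcol' : ∀ c b, (0, c) ∈ O' → (Y, b) ∈ O' → 0 < Y ∧ b ≤ c := by
    rintro c b ⟨⟨-, hc⟩, hcO⟩ ⟨⟨-, hb⟩, hbO⟩
    have := hrow (X - b) (X - c) (by simpa [σ, antidiagReflect] using hbO)
      (by simpa [σ, antidiagReflect] using hcO)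
    simp only at hb hc
    omega
  have h0' : (0, 0) ∉ O' := fun h => hXY (by simpa [σ, antidiagReflect] using h.2)
  obtain ⟨k, hk, htop, hfree⟩ := exists_upGreedy_eq_top (X := Y) hO' hcol' h0'
  have hbox (i : ℕ) (hi : i ≤ k + X) : upGreedy O' X i ≤ (Y, X) := by
    have := (isLatticePath_upGreedy O' X 0 (k + X)).apply_le_apply (Nat.zero_le i) hi le_rfl
    rw [htop] at this
    exact this.trans (Prod.mk_le_mk.2 ⟨hk, le_rfl⟩)
  refine ⟨Y - k, by omega, fun j => σ (upGreedy O' X (X + Y - j)), ?_, ?_, ?_, ?_⟩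
  · simp [show X + Y - (Y - k) = k + X by omega, htop, σ, antidiagReflect]
  · simp [σ, antidiagReflect, upGreedy]
  · intro j hj₁ hj₂
    have h := (isLatticePath_upGreedy O' X 0 (k + X) (X + Y - (j + 1)) (Nat.zero_le _)
      (by omega)).antidiagReflect (hbox _ (by omega))
    rwa [show X + Y - (j + 1) + 1 = X + Y - j by omega] at h
  · intro j hj₁ hj₂ hj
    exact hfree (X + Y - j) (by omega) ⟨hbox _ (by omega), hj⟩

theorem exists_latticePath_avoiding (hO : O.Pairwise fun p q => 3 ≤ p.1.dist q.1 + p.2.dist q.2)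
    (hcol : ∀ c b, (0, c) ∈ O → (X, b) ∈ O → 0 < X ∧ b ≤ c)
    (hrow : ∀ a d, (a, 0) ∈ O → (d, Y) ∈ O → 0 < Y ∧ d ≤ a) (h0 : (0, 0) ∉ O)
    (hXY : (X, Y) ∉ O) :
    ∃ η : ℕ → ℕ × ℕ, η 0 = (0, 0) ∧ η (X + Y) = (X, Y) ∧ IsLatticePath η 0 (X + Y) ∧
      ∀ i ≤ X + Y, η i ∉ O := by
  obtain ⟨k, hk, htop, hfree⟩ := exists_upGreedy_eq_top (Y := Y) hO hcol h0
  obtain ⟨r, hr, g, hgr, hgend, hg, hgfree⟩ := exists_latticePath_from_left_edge hO hrow hXY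
  have hf := isLatticePath_upGreedy O Y
  have hgk : k ≤ (g (k + Y)).1 := by
    have hlevel := hg.fst_add_snd (i := k + Y) (by omega) (by omega)
    have hle := (hg.apply_le_apply (i := k + Y) (by omega) (by omega) le_rfl).2
    rw [hgr] at hlevel
    rw [hgend] at hle
    dsimp only at hlevel hle
    omega
  -- at level `r` the path `g` is on the left edge, at level `k + Y` the greedy one on the top row
  obtain ⟨l, hrl, hlk, hl⟩ := (hf r (k + Y)).exists_eq_of_cross (hg.mono le_rfl (by omega))
    (by omega) (by simp [hgr, upGreedy_fst_add_snd]) (by simp [hgr]) (by rwa [htop])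
  refine ⟨fun i => if i ≤ l then upGreedy O Y i else g i, by simp [upGreedy], ?_,
    (hf 0 l).splice (hg.mono hrl le_rfl) hl, fun i hi => ?_⟩
  · by_cases hl' : X + Y ≤ l
    · obtain rfl : X + Y = l := by omega
      simp [hl, hgend]
    · simp only [hl', if_false, hgend]
  · dsimp only
    split_ifs with hil
    · exact hfree i (by omega)
    · exact hgfree i (by omega) hi

end LatticePaths

namespace Fin

variable {n : ℕ} (a b : Fin n)

/-- The point `x` steps from `a` towards `b`; the clamp at `b` only makes it total. -/
def towards (x : ℕ) : Fin n :=
  ⟨if a ≤ b then min (a + x) b else a - x, by split_ifs <;> omega⟩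

variable {a b}

theorem val_towards {x : ℕ} (hx : x ≤ Nat.dist a b) :
    (towards a b x : ℕ) = if a ≤ b then a + x else a - x := by
  simp only [towards, Nat.dist, Fin.le_def] at hx ⊢
  split_ifs <;> omega

@[simp]
theorem towards_zero : towards a b 0 = a := by
  ext
  rw [val_towards (Nat.zero_le _)]
  split_ifs <;> rfl

@[simp]
theorem towards_dist : towards a b (Nat.dist a b) = b := by
  ext
  rw [val_towards le_rfl]
  simp only [Nat.dist, Fin.le_def]
  split_ifs <;> omega

theorem dist_towards {x y : ℕ} (hx : x ≤ Nat.dist a b) (hy : y ≤ Nat.dist a b) :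
    Nat.dist (towards a b x) (towards a b y) = Nat.dist x y := by
  rw [val_towards hx, val_towards hy]
  simp only [Nat.dist, Fin.le_def] at hx hy ⊢
  split_ifs <;> omega

theorem towards_inj {x y : ℕ} (hx : x ≤ Nat.dist a b) (hy : y ≤ Nat.dist a b) :
    towards a b x = towards a b y ↔ x = y := by
  refine ⟨fun h => ?_, congrArg _⟩
  have := dist_towards hx hy
  rw [h, Nat.dist_self] at this
  exact Nat.eq_of_dist_eq_zero this.symm

theorem pathGraph_adj_towards {x : ℕ} (hx : x + 1 ≤ Nat.dist a b) :
    (pathGraph n).Adj (towards a b x) (towards a b (x + 1)) := by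
  have := dist_towards (x := x) (y := x + 1) (by omega) hx
  rw [pathGraph_adj]
  simp only [Nat.dist] at this
  omega

theorem le_of_uIcc_towards_inter_nonempty {c d : ℕ} (hc : c ≤ Nat.dist a b)
    (hd : d ≤ Nat.dist a b)
    (h : (Set.uIcc a (towards a b c) ∩ Set.uIcc (towards a b d) b).Nonempty) : d ≤ c := by
  obtain ⟨m, hm₁, hm₂⟩ := h
  simp only [Set.mem_uIcc, Fin.le_def, val_towards hc, val_towards hd] at hm₁ hm₂
  simp only [Nat.dist] at hc hd
  split_ifs at hm₁ hm₂ <;> omega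

end Fin

namespace SimpleGraph

theorem exists_walk_of_adj_succ {V : Type*} {G : SimpleGraph V} (f : ℕ → V) (n : ℕ)
    (h : ∀ i < n, G.Adj (f i) (f (i + 1))) :
    ∃ w : G.Walk (f 0) (f n), w.length = n ∧ w.support = (List.range (n + 1)).map f := by
  have hne : (List.range (n + 1)).map f ≠ [] := by simp
  have hchain : ((List.range (n + 1)).map f).IsChain G.Adj :=
    (List.isChain_map f).2 ((List.isChain_range_succ _ n).2 h)
  exact ⟨(Walk.ofSupport _ hne hchain).copy (by simp) (by simp [List.getLast_map]), by simp,
    by simp⟩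

theorem Walk.dist_le_length_pathGraph {n : ℕ} {a b : Fin n} (w : (pathGraph n).Walk a b) :
    Nat.dist a b ≤ w.length := by
  induction w with
  | nil => simp
  | @cons x y z h w ih =>
    rw [pathGraph_adj] at h
    have := Nat.dist.triangle_inequality x y z
    simp only [Walk.length_cons, Nat.dist] at this ih ⊢
    omega

theorem pathGraph_edist {n : ℕ} (a b : Fin n) : (pathGraph n).edist a b = Nat.dist a b := by
  obtain ⟨w, hw, -⟩ := exists_walk_of_adj_succ (G := pathGraph n) (Fin.towards a b)
    (Nat.dist a b) fun i hi => Fin.pathGraph_adj_towards hi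
  let w' : (pathGraph n).Walk a b := w.copy Fin.towards_zero Fin.towards_dist
  apply le_antisymm
  · simpa [w', hw] using edist_le w'
  · obtain ⟨w'', hw''⟩ := Reachable.exists_walk_length_eq_edist ⟨w'⟩
    rw [← hw'']
    exact_mod_cast w''.dist_le_length_pathGraph

theorem boxProd_pathGraph_dist {s t : ℕ} (p q : Fin s × Fin t) :
    (pathGraph s □ pathGraph t).dist p q = Nat.dist p.1 q.1 + Nat.dist p.2 q.2 := by
  rw [SimpleGraph.dist, edist_boxProd, pathGraph_edist, pathGraph_edist]
  rfl

end SimpleGraph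

/-- Conditions (i)–(iii) for one family of fibers `{x | π x = i}`, with `κ` the position inside a
fiber. -/
def FiberCondition {V A L : Type*} [Lattice L] (M : Set V) (π : V → A) (κ : V → L) : Prop :=
  (∀ i, (M ∩ {p | π p = i}).ncard ≤ 2) ∧
    ∀ (i j : A) (u v w z : V), M ∩ {p | π p = i} = {u, v} → M ∩ {p | π p = j} = {w, z} →
      (Set.uIcc (κ u) (κ v) ∩ Set.uIcc (κ w) (κ z)).Nonempty

namespace FiberCondition

variable {V A L : Type*} [Lattice L] {M : Set V} {π : V → A} {κ : V → L}

theorem inter_eq_pair [Finite V] (hM : FiberCondition M π κ) {u v : V} (hu : u ∈ M) (hv : v ∈ M)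
    (huv : u ≠ v) (hπ : π u = π v) : M ∩ {p | π p = π u} = {u, v} := by
  refine (Set.eq_of_subset_of_ncard_le ?_ ?_ (Set.toFinite _)).symm
  · rintro x (rfl | rfl)
    exacts [⟨hu, rfl⟩, ⟨hv, hπ.symm⟩]
  · rw [Set.ncard_pair huv]
    exact hM.1 _

theorem ne_and_uIcc_inter_nonempty [Finite V] (hM : FiberCondition M π κ) {u v p q : V}
    (hu : u ∈ M) (hv : v ∈ M) (hp : p ∈ M) (hq : q ∈ M) (hpu : π p = π u) (hqv : π q = π v)
    (hpu' : p ≠ u) (hqv' : q ≠ v) (hpv : p ≠ v) (huv : u ≠ v) :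
    π u ≠ π v ∧ (Set.uIcc (κ u) (κ p) ∩ Set.uIcc (κ q) (κ v)).Nonempty := by
  by_cases hπ : π u = π v
  · have hp' : p ∈ M ∩ {x | π x = π u} := ⟨hp, hpu⟩
    rw [hM.inter_eq_pair hu hv huv hπ] at hp'
    rcases hp' with rfl | rfl <;> contradiction
  · exact ⟨hπ, hM.2 (π u) (π q) u p q v (hM.inter_eq_pair hu hp hpu'.symm hpu.symm)
      (hM.inter_eq_pair hq hv hqv' hqv)⟩

theorem preimage_equiv {W : Type*} (hM : FiberCondition M π κ) (e : W ≃ V) :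
    FiberCondition (e ⁻¹' M) (π ∘ e) (κ ∘ e) := by
  have hfiber (i : A) : e ⁻¹' M ∩ {p | (π ∘ e) p = i} = e ⁻¹' (M ∩ {p | π p = i}) := rfl
  refine ⟨fun i => ?_, fun i j u v w z huv hwz => ?_⟩
  · rw [hfiber, Set.ncard_preimage_of_injective_subset_range e.injective (by simp)]
    exact hM.1 i
  · have hpair {S : Set V} {a b : W} (h : e ⁻¹' S = {a, b}) : S = {e a, e b} := by
      rw [← Set.image_preimage_eq S e.surjective, h, Set.image_pair]
    exact hM.2 i j _ _ _ _ (hpair huv) (hpair hwz)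

end FiberCondition

section Box

variable {s t : ℕ} (u v : Fin s × Fin t)

def boxCorner : ℕ × ℕ := (Nat.dist u.1 v.1, Nat.dist u.2 v.2)

/-- Coordinates on the box spanned by `u` and `v`, with `u` at the origin and `v` at
`boxCorner u v`. -/
def boxPoint (p : ℕ × ℕ) : Fin s × Fin t := (Fin.towards u.1 v.1 p.1, Fin.towards u.2 v.2 p.2)

def boxObstacles (M : Set (Fin s × Fin t)) : Set (ℕ × ℕ) :=
  {p | p ≤ boxCorner u v ∧ boxPoint u v p ∈ M ∧ p ≠ (0, 0) ∧ p ≠ boxCorner u v}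

variable {u v}

@[simp]
theorem boxPoint_zero : boxPoint u v (0, 0) = u := by
  simp [boxPoint]

@[simp]
theorem boxPoint_boxCorner : boxPoint u v (boxCorner u v) = v := by
  simp [boxPoint, boxCorner]

theorem dist_boxPoint {p q : ℕ × ℕ} (hp : p ≤ boxCorner u v) (hq : q ≤ boxCorner u v) :
    (pathGraph s □ pathGraph t).dist (boxPoint u v p) (boxPoint u v q) =
      p.1.dist q.1 + p.2.dist q.2 := by
  rw [boxProd_pathGraph_dist, boxPoint, boxPoint, Fin.dist_towards hp.1 hq.1,
    Fin.dist_towards hp.2 hq.2]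

theorem boxPoint_inj {p q : ℕ × ℕ} (hp : p ≤ boxCorner u v) (hq : q ≤ boxCorner u v) :
    boxPoint u v p = boxPoint u v q ↔ p = q := by
  rw [boxPoint, boxPoint, Prod.mk.injEq, Fin.towards_inj hp.1 hq.1, Fin.towards_inj hp.2 hq.2,
    Prod.ext_iff]

theorem adj_boxPoint {p q : ℕ × ℕ} (h : LatticeStep p q) (hq : q ≤ boxCorner u v) :
    (pathGraph s □ pathGraph t).Adj (boxPoint u v p) (boxPoint u v q) := by
  obtain ⟨hq₁, hq₂⟩ := hq
  rcases h with rfl | rfl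
  · exact boxProd_adj_left.2 (Fin.pathGraph_adj_towards hq₁)
  · exact boxProd_adj_right.2 (Fin.pathGraph_adj_towards hq₂)

theorem exists_shortest_path_of_latticePath {M : Set (Fin s × Fin t)} {η : ℕ → ℕ × ℕ}
    (h0 : η 0 = (0, 0)) (hend : η ((boxCorner u v).1 + (boxCorner u v).2) = boxCorner u v)
    (hη : IsLatticePath η 0 ((boxCorner u v).1 + (boxCorner u v).2))
    (hfree : ∀ i ≤ (boxCorner u v).1 + (boxCorner u v).2, η i ∉ boxObstacles u v M) :
    ∃ p : (pathGraph s □ pathGraph t).Walk u v, p.IsPath ∧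
      p.length = (pathGraph s □ pathGraph t).dist u v ∧ ∀ w ∈ p.support, w ∈ M → w = u ∨ w = v := by
  set n := (boxCorner u v).1 + (boxCorner u v).2
  have hbox (i : ℕ) (hi : i ≤ n) : η i ≤ boxCorner u v := by
    have := hη.apply_le_apply (Nat.zero_le i) hi le_rfl
    rwa [hend] at this
  obtain ⟨w, hlen, hsupp⟩ := exists_walk_of_adj_succ (boxPoint u v ∘ η) n
    fun i hi => adj_boxPoint (hη i (Nat.zero_le i) hi) (hbox (i + 1) hi)
  have hdist : (pathGraph s □ pathGraph t).dist u v = n := boxProd_pathGraph_dist u v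
  let w' : (pathGraph s □ pathGraph t).Walk u v := w.copy (by simp [h0]) (by simp [hend])
  refine ⟨w', w'.isPath_of_length_eq_dist (by simp [w', hlen, hdist]), by simp [w', hlen, hdist],
    fun x hx hxM => ?_⟩
  rw [Walk.support_copy, hsupp, List.mem_map] at hx
  obtain ⟨i, hi, rfl⟩ := hx
  have hi : i ≤ n := Nat.lt_succ_iff.mp (List.mem_range.mp hi)
  by_contra! hne
  exact hfree i hi ⟨hbox i hi, hxM, fun h => hne.1 (by simp [h]),
    fun h => hne.2 (by simp [h])⟩

theorem boxObstacles_pairwise {M : Set (Fin s × Fin t)}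
    (hM : ∀ x ∈ M, ∀ y ∈ M, x ≠ y → 3 ≤ (pathGraph s □ pathGraph t).dist x y) :
    (boxObstacles u v M).Pairwise fun p q => 3 ≤ p.1.dist q.1 + p.2.dist q.2 := by
  rintro p ⟨hp, hpM, -⟩ q ⟨hq, hqM, -⟩ hpq
  rw [← dist_boxPoint hp hq]
  exact hM _ hpM _ hqM ((boxPoint_inj hp hq).not.2 hpq)

theorem boxObstacles_col {M : Set (Fin s × Fin t)} (hM : FiberCondition M Prod.fst Prod.snd)
    (hu : u ∈ M) (hv : v ∈ M) (c b : ℕ) (hc : (0, c) ∈ boxObstacles u v M)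
    (hb : ((boxCorner u v).1, b) ∈ boxObstacles u v M) : 0 < (boxCorner u v).1 ∧ b ≤ c := by
  obtain ⟨hc, hcM, hc0, hcv⟩ := hc
  obtain ⟨hb, hbM, -, hbv⟩ := hb
  have h0 : ((0, 0) : ℕ × ℕ) ≤ boxCorner u v := ⟨Nat.zero_le _, Nat.zero_le _⟩
  have huv : ((0, 0) : ℕ × ℕ) ≠ boxCorner u v := fun h => hc0 <| by
    have := hc.2
    simp only [← h] at this
    simp [Nat.le_zero.mp this]
  have hfibers := hM.ne_and_uIcc_inter_nonempty (u := boxPoint u v (0, 0))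
    (v := boxPoint u v (boxCorner u v)) (by simpa using hu) (by simpa using hv) hcM hbM rfl rfl
    ((boxPoint_inj hc h0).not.2 hc0) ((boxPoint_inj hb le_rfl).not.2 hbv)
    ((boxPoint_inj hc le_rfl).not.2 hcv) ((boxPoint_inj h0 le_rfl).not.2 huv)
  simp only [boxPoint, boxCorner, Fin.towards_zero, Fin.towards_dist] at hfibers
  exact ⟨Nat.pos_of_ne_zero fun h => hfibers.1 (Fin.ext (Nat.eq_of_dist_eq_zero h)),
    Fin.le_of_uIcc_towards_inter_nonempty hc.2 hb.2 hfibers.2⟩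

theorem swap_mem_boxObstacles {M : Set (Fin s × Fin t)} {p : ℕ × ℕ} :
    p.swap ∈ boxObstacles u.swap v.swap (Prod.swap ⁻¹' M) ↔ p ∈ boxObstacles u v M := by
  have hc : boxCorner u.swap v.swap = (boxCorner u v).swap := rfl
  have hp : boxPoint u.swap v.swap p.swap = (boxPoint u v p).swap := rfl
  simp [boxObstacles, hc, hp, Prod.swap_eq_iff_eq_swap]

theorem boxObstacles_row {M : Set (Fin s × Fin t)} (hM : FiberCondition M Prod.snd Prod.fst)
    (hu : u ∈ M) (hv : v ∈ M) (a d : ℕ) (ha : (a, 0) ∈ boxObstacles u v M)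
    (hd : (d, (boxCorner u v).2) ∈ boxObstacles u v M) : 0 < (boxCorner u v).2 ∧ d ≤ a :=
  boxObstacles_col (u := u.swap) (v := v.swap) (hM.preimage_equiv (Equiv.prodComm _ _)) hu hv
    a d (swap_mem_boxObstacles.2 ha) (swap_mem_boxObstacles.2 hd)

end Box

theorem mutualVisibilitySet_of_conditions_general (s t : ℕ)
    (M : Set (Fin s × Fin t))
    (h1 : ∀ i : Fin t, (M ∩ {p : Fin s × Fin t | p.2 = i}).ncard ≤ 2)
    (h1' : ∀ j : Fin s, (M ∩ {p : Fin s × Fin t | p.1 = j}).ncard ≤ 2)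
    (h2 : ∀ (i j : Fin t) (u v w z : Fin s × Fin t),
      M ∩ {p : Fin s × Fin t | p.2 = i} = {u, v} →
      M ∩ {p : Fin s × Fin t | p.2 = j} = {w, z} →
      (Set.uIcc u.1 v.1 ∩ Set.uIcc w.1 z.1).Nonempty)
    (h3 : ∀ (i j : Fin s) (u v w z : Fin s × Fin t),
      M ∩ {p : Fin s × Fin t | p.1 = i} = {u, v} →
      M ∩ {p : Fin s × Fin t | p.1 = j} = {w, z} →
      (Set.uIcc u.2 v.2 ∩ Set.uIcc w.2 z.2).Nonempty)
    (h4 : ∀ u ∈ M, ∀ v ∈ M, u ≠ v → 3 ≤ (pathGraph s □ pathGraph t).dist u v) :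
    IsMutualVisibilitySet (pathGraph s □ pathGraph t) M := by
  intro u hu v hv
  obtain ⟨η, h0, hend, hη, hfree⟩ := exists_latticePath_avoiding (boxObstacles_pairwise h4)
    (boxObstacles_col ⟨h1', h3⟩ hu hv) (boxObstacles_row ⟨h1, h2⟩ hu hv)
    (fun h => h.2.2.1 rfl) (fun h => h.2.2.2 rfl)
  exact exists_shortest_path_of_latticePath h0 hend hη hfree

theorem mutualVisibilitySet_of_conditions (s t : ℕ) (hs : 2 ≤ s) (ht : 2 ≤ t)
    (M : Set (Fin s × Fin t))
    (h1 : ∀ i : Fin t, (M ∩ {p : Fin s × Fin t | p.2 = i}).ncard ≤ 2)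
    (h1' : ∀ j : Fin s, (M ∩ {p : Fin s × Fin t | p.1 = j}).ncard ≤ 2)
    (h2 : ∀ (i j : Fin t) (u v w z : Fin s × Fin t),
      M ∩ {p : Fin s × Fin t | p.2 = i} = {u, v} →
      M ∩ {p : Fin s × Fin t | p.2 = j} = {w, z} →
      (Set.uIcc u.1 v.1 ∩ Set.uIcc w.1 z.1).Nonempty)
    (h3 : ∀ (i j : Fin s) (u v w z : Fin s × Fin t),
      M ∩ {p : Fin s × Fin t | p.1 = i} = {u, v} →
      M ∩ {p : Fin s × Fin t | p.1 = j} = {w, z} →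
      (Set.uIcc u.2 v.2 ∩ Set.uIcc w.2 z.2).Nonempty)
    (h4 : ∀ u ∈ M, ∀ v ∈ M, u ≠ v → 3 ≤ (pathGraph s □ pathGraph t).dist u v) :
    IsMutualVisibilitySet (pathGraph s □ pathGraph t) M :=
  mutualVisibilitySet_of_conditions_general s t M h1 h1' h2 h3 h4
end

section
/- If s ≥ 2 and t ≥ 3 are integers, then the mutual-visibility number of the Cartesian product P_s □ C_t satisfies μ(P_s □ C_t) ≤ min{3s, 2t}. -/
open SimpleGraph

/-! ### Auxiliary lemmas -/

lemma cycDist_triangle {t : ℕ} (a b c : Fin t) :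
    cycDist t a c ≤ cycDist t a b + cycDist t b c := by
  have ha := a.isLt; have hb := b.isLt; have hc := c.isLt
  simp only [cycDist, Nat.dist]; omega

lemma cycDist_pos {t : ℕ} {a b : Fin t} (h : a ≠ b) : 1 ≤ cycDist t a b := by
  have ha := a.isLt; have hb := b.isLt
  have : a.val ≠ b.val := fun hv => h (Fin.ext hv)
  simp only [cycDist, Nat.dist]; omega

lemma cycDist_adj {t : ℕ} {a b : Fin t} (h : (cycleGraph t).Adj a b) :
    cycDist t a b ≤ 1 := by
  have ha := a.isLt; have hb := b.isLt
  rw [cycleGraph_adj'] at h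
  have hs : ∀ x y : Fin t, (x - y).val = 1 → cycDist t x y ≤ 1 := by
    intro x y hxy
    have hx := x.isLt; have hy := y.isLt
    rw [Fin.sub_def] at hxy
    simp only at hxy
    rcases Nat.lt_or_ge (t - y.val + x.val) t with h1 | h1
    · rw [Nat.mod_eq_of_lt h1] at hxy
      simp only [cycDist, Nat.dist]; omega
    · have h2 : t - y.val + x.val - t < t := by omega
      rw [Nat.mod_eq_sub_mod h1, Nat.mod_eq_of_lt h2] at hxy
      simp only [cycDist, Nat.dist]; omega
  rcases h with h | h
  · exact hs a b h
  · have := hs b a h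
    simpa only [cycDist, Nat.dist_comm] using this

section Counts
variable {s t : ℕ}

/-- number of steps of a walk in `P_s □ C_t` moving in the path coordinate -/
def cntL {u v : Fin s × Fin t} (p : (pathGraph s □ cycleGraph t).Walk u v) : ℕ :=
  p.darts.countP (fun d => decide (d.toProd.1.2 = d.toProd.2.2))

/-- number of steps of a walk in `P_s □ C_t` moving in the cycle coordinate -/
def cntR {u v : Fin s × Fin t} (p : (pathGraph s □ cycleGraph t).Walk u v) : ℕ :=
  p.darts.countP (fun d => decide (d.toProd.1.1 = d.toProd.2.1))

lemma cnt_sum {u v : Fin s × Fin t} (p : (pathGraph s □ cycleGraph t).Walk u v) :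
    cntL p + cntR p = p.length := by
  induction p with
  | nil => simp [cntL, cntR]
  | @cons a b c h q ih =>
    rcases (boxProd_adj.mp h) with ⟨h1, h2⟩ | ⟨h1, h2⟩
    · have hne : ¬ (a.1 = b.1) := h1.ne
      simp only [cntL, cntR, Walk.darts_cons, List.countP_cons, Walk.length_cons] at *
      simp [h2, hne]; omega
    · have hne : ¬ (a.2 = b.2) := h1.ne
      simp only [cntL, cntR, Walk.darts_cons, List.countP_cons, Walk.length_cons] at *
      simp [h2, hne]; omega

lemma cntL_append {u v w : Fin s × Fin t} (p : (pathGraph s □ cycleGraph t).Walk u v)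
    (q : (pathGraph s □ cycleGraph t).Walk v w) :
    cntL (p.append q) = cntL p + cntL q := by
  simp [cntL, Walk.darts_append, List.countP_append]

lemma cntR_append {u v w : Fin s × Fin t} (p : (pathGraph s □ cycleGraph t).Walk u v)
    (q : (pathGraph s □ cycleGraph t).Walk v w) :
    cntR (p.append q) = cntR p + cntR q := by
  simp [cntR, Walk.darts_append, List.countP_append]

lemma pathGraph_adj_dist {x y : Fin s} (h : (pathGraph s).Adj x y) :
    Nat.dist x.val y.val = 1 := by
  rw [pathGraph_adj] at h
  simp only [Nat.dist]; omega

lemma cntL_ge {u v : Fin s × Fin t} (p : (pathGraph s □ cycleGraph t).Walk u v) :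
    Nat.dist u.1.val v.1.val ≤ cntL p := by
  induction p with
  | nil => simp [Nat.dist]
  | @cons a b c h q ih =>
    rcases (boxProd_adj.mp h) with ⟨h1, h2⟩ | ⟨h1, h2⟩
    · have hd := pathGraph_adj_dist h1
      have htri := Nat.dist.triangle_inequality a.1.val b.1.val c.1.val
      simp only [cntL, Walk.darts_cons, List.countP_cons] at *
      simp only [h2] at *
      simp at *
      omega
    · simp only [cntL, Walk.darts_cons, List.countP_cons] at *
      rw [h2]
      omega

lemma cntR_ge {u v : Fin s × Fin t} (p : (pathGraph s □ cycleGraph t).Walk u v) :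
    cycDist t u.2 v.2 ≤ cntR p := by
  induction p with
  | nil => simp [cycDist, Nat.dist]
  | @cons a b c h q ih =>
    rcases (boxProd_adj.mp h) with ⟨h1, h2⟩ | ⟨h1, h2⟩
    · simp only [cntR, Walk.darts_cons, List.countP_cons] at *
      rw [h2]
      omega
    · have hd := cycDist_adj h1
      have htri := cycDist_triangle a.2 b.2 c.2
      simp only [cntR, Walk.darts_cons, List.countP_cons] at *
      simp only [h2] at *
      simp at *
      omega

lemma two_le_cntL {u v : Fin s × Fin t} (p : (pathGraph s □ cycleGraph t).Walk u v)
    {z : Fin s × Fin t} (hz : z ∈ p.support) (h1 : z.1 ≠ u.1) (h2 : z.1 ≠ v.1) :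
    2 ≤ cntL p := by
  obtain ⟨q, r, rfl⟩ := Walk.mem_support_iff_exists_append.mp hz
  rw [cntL_append]
  have g1 := cntL_ge q
  have g2 := cntL_ge r
  have e1 : u.1.val ≠ z.1.val := fun hv => h1 (Fin.ext hv.symm)
  have e2 : z.1.val ≠ v.1.val := fun hv => h2 (Fin.ext hv)
  simp only [Nat.dist] at g1 g2
  omega

lemma two_le_cntR {u v : Fin s × Fin t} (p : (pathGraph s □ cycleGraph t).Walk u v)
    {z : Fin s × Fin t} (hz : z ∈ p.support) (h1 : z.2 ≠ u.2) (h2 : z.2 ≠ v.2) :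
    2 ≤ cntR p := by
  obtain ⟨q, r, rfl⟩ := Walk.mem_support_iff_exists_append.mp hz
  rw [cntR_append]
  have g1 := cntR_ge q
  have g2 := cntR_ge r
  have e1 : 1 ≤ cycDist t u.2 z.2 := cycDist_pos (fun hv => h1 hv.symm)
  have e2 : 1 ≤ cycDist t z.2 v.2 := cycDist_pos h2
  omega

lemma adj_fst_dist {u w : Fin s × Fin t} (h : (pathGraph s □ cycleGraph t).Adj u w) :
    Nat.dist u.1.val w.1.val ≤ 1 := by
  rcases (boxProd_adj.mp h) with ⟨h1, _⟩ | ⟨_, h1⟩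
  · rw [pathGraph_adj] at h1; simp only [Nat.dist]; omega
  · rw [h1]; simp [Nat.dist]

lemma adj_snd_dist {u w : Fin s × Fin t} (h : (pathGraph s □ cycleGraph t).Adj u w) :
    cycDist t u.2 w.2 ≤ 1 := by
  rcases (boxProd_adj.mp h) with ⟨_, h1⟩ | ⟨h1, _⟩
  · rw [h1]; simp [cycDist, Nat.dist]
  · exact cycDist_adj h1

lemma cross_path {u v : Fin s × Fin t} (p : (pathGraph s □ cycleGraph t).Walk u v)
    (j : ℕ)
    (h1 : (u.1.val ≤ j ∧ j ≤ v.1.val) ∨ (v.1.val ≤ j ∧ j ≤ u.1.val)) :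
    ∃ z ∈ p.support, z.1.val = j := by
  induction p with
  | nil =>
    rename_i w
    exact ⟨w, by simp, by omega⟩
  | @cons a b c h q ih =>
    by_cases hb : (b.1.val ≤ j ∧ j ≤ c.1.val) ∨ (c.1.val ≤ j ∧ j ≤ b.1.val)
    · obtain ⟨z, hz, hzj⟩ := ih hb
      exact ⟨z, by simp [hz], hzj⟩
    · refine ⟨a, by simp, ?_⟩
      have hd := adj_fst_dist h
      simp only [Nat.dist] at hd
      push_neg at hb
      omega

lemma cross_cycle {u v : Fin s × Fin t} (p : (pathGraph s □ cycleGraph t).Walk u v)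
    (b2 b4 : ℕ) (hb4 : b4 < t)
    (hu : ¬ (b2 < u.2.val ∧ u.2.val < b4))
    (hv : b2 < v.2.val ∧ v.2.val < b4) :
    ∃ z ∈ p.support, z.2.val = b2 ∨ z.2.val = b4 := by
  induction p with
  | nil => exact absurd hv hu
  | @cons a b c h q ih =>
    by_cases hb : b2 < b.2.val ∧ b.2.val < b4
    · refine ⟨a, by simp, ?_⟩
      have hd := adj_snd_dist h
      have ha2 := a.2.isLt
      have hbb := b.2.isLt
      simp only [cycDist, Nat.dist] at hd
      omega
    · obtain ⟨z, hz, hzj⟩ := ih hb hv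
      exact ⟨z, by simp [hz], hzj⟩
end Counts

/-- A walk along the path graph realizing `Nat.dist`. -/
lemma pathWalk_exists {s : ℕ} (i j : Fin s) :
    ∃ w : (pathGraph s).Walk i j, w.length = Nat.dist i.val j.val := by
  obtain ⟨n, hn⟩ : ∃ n, Nat.dist i.val j.val = n := ⟨_, rfl⟩
  induction n generalizing i with
  | zero =>
    have : i = j := Fin.ext (by simp only [Nat.dist] at hn; omega)
    subst this; exact ⟨Walk.nil, by simp [hn]⟩
  | succ n ih =>
    rcases Nat.lt_or_ge i.val j.val with hlt | hge
    · have hadj : (pathGraph s).Adj i ⟨i.val + 1, by omega⟩ := by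
        rw [pathGraph_adj]; left; rfl
      have hd : Nat.dist (i.val + 1) j.val = n := by
        simp only [Nat.dist] at hn ⊢; omega
      obtain ⟨w, hw⟩ := ih ⟨i.val + 1, by omega⟩ hd
      exact ⟨Walk.cons hadj w, by simp [hw, hd, hn]⟩
    · have hne : i.val ≠ j.val := by simp only [Nat.dist] at hn; omega
      have hpos : 0 < i.val := by omega
      have hadj : (pathGraph s).Adj i ⟨i.val - 1, by omega⟩ := by
        rw [pathGraph_adj]; right; simp; omega
      have hd : Nat.dist (i.val - 1) j.val = n := by
        simp only [Nat.dist] at hn ⊢; omega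
      obtain ⟨w, hw⟩ := ih ⟨i.val - 1, by omega⟩ hd
      exact ⟨Walk.cons hadj w, by simp [hw, hd, hn]⟩

/-- Stepping forward around the cycle. -/
lemma cycle_step {t : ℕ} (ht : 2 ≤ t) (x : Fin t) :
    (cycleGraph t).Adj x ⟨(x.val + 1) % t, Nat.mod_lt _ (by omega)⟩ := by
  rw [cycleGraph_adj']
  right
  rw [Fin.sub_def]
  simp only
  have hx := x.isLt
  rcases Nat.lt_or_ge (x.val + 1) t with h | h
  · rw [Nat.mod_eq_of_lt h]
    have h2 : t - x.val + (x.val + 1) = t + 1 := by omega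
    rw [h2, Nat.add_mod_left, Nat.mod_eq_of_lt (by omega)]
  · have hx1 : x.val + 1 = t := by omega
    have h0 : (x.val + 1) % t = 0 := by rw [hx1, Nat.mod_self]
    rw [h0]
    have h2 : t - x.val + 0 = 1 := by omega
    rw [h2, Nat.mod_eq_of_lt (by omega)]

lemma cycleWalk_fwd {t : ℕ} (ht : 2 ≤ t) (k : ℕ) (x : Fin t) :
    ∃ w : (cycleGraph t).Walk x ⟨(x.val + k) % t, Nat.mod_lt _ (by omega)⟩,
      w.length = k := by
  induction k generalizing x with
  | zero =>
    have he : x = ⟨(x.val + 0) % t, Nat.mod_lt _ (by omega)⟩ :=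
      Fin.ext (by simp [Nat.mod_eq_of_lt x.isLt])
    exact ⟨Walk.nil.copy rfl he, by simp⟩
  | succ k ih =>
    obtain ⟨w, hw⟩ := ih ⟨(x.val + 1) % t, Nat.mod_lt _ (by omega)⟩
    have he : (⟨((⟨(x.val + 1) % t, Nat.mod_lt _ (by omega)⟩ : Fin t).val + k) % t,
          Nat.mod_lt _ (by omega)⟩ : Fin t)
        = ⟨(x.val + (k + 1)) % t, Nat.mod_lt _ (by omega)⟩ := by
      apply Fin.ext
      simp only
      rw [Nat.mod_add_mod]
      ring_nf
    exact ⟨Walk.cons (cycle_step ht x) (w.copy rfl he), by simp [hw]⟩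

/-- A walk on the cycle realizing the cyclic distance. -/
lemma cycleWalk_exists {t : ℕ} (ht : 2 ≤ t) (x y : Fin t) :
    ∃ w : (cycleGraph t).Walk x y, w.length = cycDist t x y := by
  have hx := x.isLt; have hy := y.isLt
  have fwd : ∀ (a b : Fin t) (k : ℕ), (a.val + k) % t = b.val →
      ∃ w : (cycleGraph t).Walk a b, w.length = k := by
    intro a b k hk
    obtain ⟨w, hw⟩ := cycleWalk_fwd ht k a
    exact ⟨w.copy rfl (Fin.ext hk), by simp [hw]⟩
  have hd : Nat.dist x.val y.val = (x.val - y.val) + (y.val - x.val) := rfl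
  rcases le_total (Nat.dist x.val y.val) (t - Nat.dist x.val y.val) with hm | hm
  · have hcd : cycDist t x y = Nat.dist x.val y.val := min_eq_left hm
    rcases le_total x.val y.val with hxy | hxy
    · obtain ⟨w, hw⟩ := fwd x y (Nat.dist x.val y.val)
        (by rw [hd, Nat.mod_eq_of_lt (by omega)]; omega)
      exact ⟨w, by rw [hw, hcd]⟩
    · obtain ⟨w, hw⟩ := fwd y x (Nat.dist x.val y.val)
        (by rw [hd, Nat.mod_eq_of_lt (by omega)]; omega)
      exact ⟨w.reverse, by rw [Walk.length_reverse, hw, hcd]⟩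
  · have hcd : cycDist t x y = t - Nat.dist x.val y.val := min_eq_right hm
    rcases le_total x.val y.val with hxy | hxy
    · obtain ⟨w, hw⟩ := fwd y x (t - Nat.dist x.val y.val)
        (by
          have h2 : y.val + (t - Nat.dist x.val y.val) = t + x.val := by rw [hd]; omega
          rw [h2, Nat.add_mod_left, Nat.mod_eq_of_lt (by omega)])
      exact ⟨w.reverse, by rw [Walk.length_reverse, hw, hcd]⟩
    · obtain ⟨w, hw⟩ := fwd x y (t - Nat.dist x.val y.val)
        (by
          have h2 : x.val + (t - Nat.dist x.val y.val) = t + y.val := by rw [hd]; omega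
          rw [h2, Nat.add_mod_left, Nat.mod_eq_of_lt (by omega)])
      exact ⟨w, by rw [hw, hcd]⟩

section Fibers
variable {s t : ℕ}

lemma dist_le_pathDist (i1 i2 : Fin s) (a : Fin t) :
    (pathGraph s □ cycleGraph t).dist (i1, a) (i2, a) ≤ Nat.dist i1.val i2.val := by
  obtain ⟨w, hw⟩ := pathWalk_exists i1 i2
  have := SimpleGraph.dist_le (w.boxProdLeft (cycleGraph t) a)
  rwa [show (w.boxProdLeft (cycleGraph t) a).length = w.length from
    Walk.length_map _ _, hw] at this

lemma dist_le_cycDist (ht : 2 ≤ t) (i : Fin s) (b1 b2 : Fin t) :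
    (pathGraph s □ cycleGraph t).dist (i, b1) (i, b2) ≤ cycDist t b1 b2 := by
  obtain ⟨w, hw⟩ := cycleWalk_exists ht b1 b2
  have := SimpleGraph.dist_le (w.boxProdRight (pathGraph s) i)
  rwa [show (w.boxProdRight (pathGraph s) i).length = w.length from
    Walk.length_map _ _, hw] at this

/-- At most two vertices of a mutual-visibility set in each path fiber. -/
lemma path_fiber {M : Set (Fin s × Fin t)}
    (hM : IsMutualVisibilitySet (pathGraph s □ cycleGraph t) M) (a : Fin t)
    {i1 i2 i3 : Fin s} (h12 : i1.val < i2.val) (h23 : i2.val < i3.val)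
    (m1 : (i1, a) ∈ M) (m2 : (i2, a) ∈ M) (m3 : (i3, a) ∈ M) : False := by
  obtain ⟨p, _, hlen, hsup⟩ := hM (i1, a) m1 (i3, a) m3
  have hni : (i2, a) ∉ p.support := by
    intro hin
    rcases hsup _ hin m2 with h | h
    · exact absurd (congrArg (fun x => x.1.val) h) (by simp; omega)
    · exact absurd (congrArg (fun x => x.1.val) h) (by simp; omega)
  obtain ⟨z, hz, hzv⟩ := cross_path p i2.val (Or.inl ⟨by simp; omega, by simp; omega⟩)
  have hz1 : z.1 = i2 := Fin.ext hzv
  have hz2 : z.2 ≠ a := by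
    intro h
    apply hni
    have hzeq : z = (i2, a) := Prod.ext hz1 h
    rwa [hzeq] at hz
  have h2R : 2 ≤ cntR p := two_le_cntR p hz hz2 hz2
  have hL := cntL_ge p
  have hsum := cnt_sum p
  have hub := dist_le_pathDist (s := s) (t := t) i1 i3 a
  rw [← hlen] at hub
  simp only [Nat.dist] at hL hub
  omega

/-- At most three vertices of a mutual-visibility set in each cycle fiber. -/
lemma cycle_fiber (ht : 2 ≤ t) {M : Set (Fin s × Fin t)}
    (hM : IsMutualVisibilitySet (pathGraph s □ cycleGraph t) M) (i : Fin s)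
    {b1 b2 b3 b4 : Fin t} (h12 : b1.val < b2.val) (h23 : b2.val < b3.val)
    (h34 : b3.val < b4.val)
    (m1 : (i, b1) ∈ M) (m2 : (i, b2) ∈ M) (m3 : (i, b3) ∈ M) (m4 : (i, b4) ∈ M) :
    False := by
  obtain ⟨p, _, hlen, hsup⟩ := hM (i, b1) m1 (i, b3) m3
  have hni2 : (i, b2) ∉ p.support := by
    intro hin
    rcases hsup _ hin m2 with h | h
    · exact absurd (congrArg (fun x => x.2.val) h) (by simp; omega)
    · exact absurd (congrArg (fun x => x.2.val) h) (by simp; omega)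
  have hni4 : (i, b4) ∉ p.support := by
    intro hin
    rcases hsup _ hin m4 with h | h
    · exact absurd (congrArg (fun x => x.2.val) h) (by simp; omega)
    · exact absurd (congrArg (fun x => x.2.val) h) (by simp; omega)
  obtain ⟨z, hz, hzv⟩ := cross_cycle p b2.val b4.val b4.isLt
    (by simp; omega) ⟨by simpa using h23, by simpa using h34⟩
  have hz1 : z.1 ≠ i := by
    intro h
    rcases hzv with hv | hv
    · exact hni2 (by rw [show (i, b2) = z from Prod.ext h.symm (Fin.ext hv).symm]; exact hz)
    · exact hni4 (by rw [show (i, b4) = z from Prod.ext h.symm (Fin.ext hv).symm]; exact hz)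
  have h2L : 2 ≤ cntL p := two_le_cntL p hz hz1 hz1
  have hR := cntR_ge p
  have hsum := cnt_sum p
  have hub := dist_le_cycDist (s := s) ht i b1 b3
  rw [← hlen] at hub
  simp only at hR
  omega
end Fibers

/-- Extracting three increasingly-sorted elements of a finset. -/
lemma three_sorted {m : ℕ} (F : Finset (Fin m)) (h : 3 ≤ F.card) :
    ∃ b1 b2 b3, b1 ∈ F ∧ b2 ∈ F ∧ b3 ∈ F ∧ b1.val < b2.val ∧ b2.val < b3.val := by
  set e := F.orderIsoOfFin rfl with he
  refine ⟨e ⟨0, by omega⟩, e ⟨1, by omega⟩, e ⟨2, by omega⟩,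
    (e _).2, (e _).2, (e _).2, ?_, ?_⟩
  · exact e.strictMono (by simp [Fin.lt_def])
  · exact e.strictMono (by simp [Fin.lt_def])

/-- Extracting four increasingly-sorted elements of a finset. -/
lemma four_sorted {m : ℕ} (F : Finset (Fin m)) (h : 4 ≤ F.card) :
    ∃ b1 b2 b3 b4, b1 ∈ F ∧ b2 ∈ F ∧ b3 ∈ F ∧ b4 ∈ F ∧
      b1.val < b2.val ∧ b2.val < b3.val ∧ b3.val < b4.val := by
  set e := F.orderIsoOfFin rfl with he
  refine ⟨e ⟨0, by omega⟩, e ⟨1, by omega⟩, e ⟨2, by omega⟩, e ⟨3, by omega⟩,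
    (e _).2, (e _).2, (e _).2, (e _).2, ?_, ?_, ?_⟩
  · exact e.strictMono (by simp [Fin.lt_def])
  · exact e.strictMono (by simp [Fin.lt_def])
  · exact e.strictMono (by simp [Fin.lt_def])

theorem mutualVisibilityNumber_pathGraph_boxProd_cycleGraph_le (s t : ℕ)
    (hs : 2 ≤ s) (ht : 3 ≤ t) :
    mutualVisibilityNumber (pathGraph s □ cycleGraph t) ≤ min (3 * s) (2 * t) := by
  rw [mutualVisibilityNumber]
  apply csSup_le
  · exact ⟨0, ∅, fun u hu => absurd hu (Set.notMem_empty u), Set.ncard_empty _⟩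
  rintro n ⟨M, hM, rfl⟩
  classical
  have hfin : M.Finite := M.toFinite
  set F := hfin.toFinset with hF
  have hcard : M.ncard = F.card := Set.ncard_eq_toFinset_card _ hfin
  have hmem : ∀ x, x ∈ F ↔ x ∈ M := fun x => hfin.mem_toFinset
  rw [hcard]
  refine le_min ?_ ?_
  · -- bound by 3s via cycle fibers
    rw [Finset.card_eq_sum_card_fiberwise
      (f := Prod.fst) (t := (Finset.univ : Finset (Fin s))) (fun x _ => Finset.mem_univ _)]
    have hbound : ∀ i : Fin s, (F.filter fun x => x.1 = i).card ≤ 3 := by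
      intro i
      by_contra hcon
      push_neg at hcon
      set Fi := F.filter fun x => x.1 = i with hFi
      have hinj : Set.InjOn Prod.snd (Fi : Set (Fin s × Fin t)) := by
        intro x hx y hy hxy
        simp only [hFi, Finset.coe_filter, Set.mem_setOf_eq] at hx hy
        exact Prod.ext (hx.2.trans hy.2.symm) hxy
      have himg : 4 ≤ (Fi.image Prod.snd).card := by
        rw [Finset.card_image_of_injOn hinj]; omega
      obtain ⟨b1, b2, b3, b4, hb1, hb2, hb3, hb4, o12, o23, o34⟩ :=
        four_sorted _ himg
      have hmemM : ∀ b ∈ Fi.image Prod.snd, (i, b) ∈ M := by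
        intro b hb
        obtain ⟨x, hx, hxb⟩ := Finset.mem_image.mp hb
        simp only [hFi, Finset.mem_filter] at hx
        have : x = (i, b) := Prod.ext hx.2 hxb
        rw [← this]
        exact (hmem x).mp hx.1
      exact cycle_fiber (by omega) hM i o12 o23 o34
        (hmemM _ hb1) (hmemM _ hb2) (hmemM _ hb3) (hmemM _ hb4)
    calc ∑ i : Fin s, (F.filter fun x => x.1 = i).card
        ≤ ∑ _i : Fin s, 3 := Finset.sum_le_sum (fun i _ => hbound i)
      _ = 3 * s := by simp [Finset.sum_const, mul_comm]
  · -- bound by 2t via path fibers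
    rw [Finset.card_eq_sum_card_fiberwise
      (f := Prod.snd) (t := (Finset.univ : Finset (Fin t))) (fun x _ => Finset.mem_univ _)]
    have hbound : ∀ a : Fin t, (F.filter fun x => x.2 = a).card ≤ 2 := by
      intro a
      by_contra hcon
      push_neg at hcon
      set Fa := F.filter fun x => x.2 = a with hFa
      have hinj : Set.InjOn Prod.fst (Fa : Set (Fin s × Fin t)) := by
        intro x hx y hy hxy
        simp only [hFa, Finset.coe_filter, Set.mem_setOf_eq] at hx hy
        exact Prod.ext hxy (hx.2.trans hy.2.symm)
      have himg : 3 ≤ (Fa.image Prod.fst).card := by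
        rw [Finset.card_image_of_injOn hinj]; omega
      obtain ⟨i1, i2, i3, hi1, hi2, hi3, o12, o23⟩ := three_sorted _ himg
      have hmemM : ∀ i ∈ Fa.image Prod.fst, (i, a) ∈ M := by
        intro i hi
        obtain ⟨x, hx, hxi⟩ := Finset.mem_image.mp hi
        simp only [hFa, Finset.mem_filter] at hx
        have : x = (i, a) := Prod.ext hxi hx.2
        rw [← this]
        exact (hmem x).mp hx.1
      exact path_fiber hM a o12 o23 (hmemM _ hi1) (hmemM _ hi2) (hmemM _ hi3)
    calc ∑ a : Fin t, (F.filter fun x => x.2 = a).card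
        ≤ ∑ _a : Fin t, 2 := Finset.sum_le_sum (fun a _ => hbound a)
      _ = 2 * t := by simp [Finset.sum_const, mul_comm]
end

section
/- Let t ≥ 3 and s > k ≥ 2 be integers. If M is a mutual-visibility set of P_k □ C_t, then M (viewed as a subset of V(P_s □ C_t) via the inclusion {0,...,k-1} ⊆ {0,...,s-1} in the first coordinate) is a mutual-visibility set of P_s □ C_t. -/
open SimpleGraph

/-!
Pushing the first coordinate of `P_s □ C_t` down to `min x (k - 1)` is a retraction onto the
copy of `P_k □ C_t` that sends every edge to an edge or to a single vertex, so it does not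
increase distances. Hence the copy is isometric, and a shortest path of `P_k □ C_t` that avoids
`M` stays a shortest path of `P_s □ C_t` that avoids the image of `M`.
-/

namespace SimpleGraph

variable {U V W X : Type*} {G : SimpleGraph V} {H : SimpleGraph W}
  {G' : SimpleGraph U} {H' : SimpleGraph X}

def IsWeakHom (G : SimpleGraph V) (H : SimpleGraph W) (f : V → W) : Prop :=
  ∀ ⦃a b⦄, G.Adj a b → f a = f b ∨ H.Adj (f a) (f b)

lemma Hom.isWeakHom (φ : G →g H) : IsWeakHom G H φ :=
  fun _ _ h => Or.inr (φ.map_adj h)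

lemma IsWeakHom.edist_le_length {f : V → W} (hf : IsWeakHom G H f) {a b : V}
    (p : G.Walk a b) : H.edist (f a) (f b) ≤ p.length := by
  induction p with
  | nil => simp
  | @cons a b c hab p ih =>
    have hstep : H.edist (f a) (f b) ≤ 1 :=
      edist_le_one_iff_adj_or_eq.mpr (hf hab).symm
    calc H.edist (f a) (f c) ≤ H.edist (f a) (f b) + H.edist (f b) (f c) :=
          SimpleGraph.edist_triangle
      _ ≤ 1 + p.length := add_le_add hstep ih
      _ = (p.cons hab).length := by rw [Walk.length_cons]; push_cast; ring

lemma IsWeakHom.edist_le {f : V → W} (hf : IsWeakHom G H f) (a b : V) :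
    H.edist (f a) (f b) ≤ G.edist a b := by
  by_cases hab : G.Reachable a b
  · obtain ⟨p, hp⟩ := hab.exists_walk_length_eq_edist
    exact hp ▸ hf.edist_le_length p
  · simp [edist_eq_top_of_not_reachable hab]

lemma Hom.dist_eq_of_leftInverse (φ : G →g H) {r : W → V} (hr : IsWeakHom H G r)
    (hrφ : Function.LeftInverse r φ) (a b : V) : H.dist (φ a) (φ b) = G.dist a b := by
  have hedist : H.edist (φ a) (φ b) = G.edist a b :=
    le_antisymm (φ.isWeakHom.edist_le a b) <| by
      simpa only [hrφ a, hrφ b] using hr.edist_le (φ a) (φ b)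
  simp only [dist, hedist]

def Hom.prodMap (φ : G →g G') (ψ : H →g H') : (G □ H) →g (G' □ H') where
  toFun := Prod.map φ ψ
  map_rel' := by
    rintro x y (⟨hxy, h⟩ | ⟨hxy, h⟩)
    · exact Or.inl ⟨φ.map_adj hxy, congrArg ψ h⟩
    · exact Or.inr ⟨ψ.map_adj hxy, congrArg φ h⟩

lemma IsWeakHom.prodMap {f : V → U} {g : W → X} (hf : IsWeakHom G G' f)
    (hg : IsWeakHom H H' g) : IsWeakHom (G □ H) (G' □ H') (Prod.map f g) := by
  rintro x y (⟨hxy, h⟩ | ⟨hxy, h⟩)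
  · rcases hf hxy with he | ha
    · exact Or.inl (Prod.ext he (congrArg g h))
    · exact Or.inr (Or.inl ⟨ha, congrArg g h⟩)
  · rcases hg hxy with he | ha
    · exact Or.inl (Prod.ext (congrArg f h) he)
    · exact Or.inr (Or.inr ⟨ha, congrArg f h⟩)

def pathGraphCastLE {k s : ℕ} (h : k ≤ s) : pathGraph k →g pathGraph s where
  toFun := Fin.castLE h
  map_rel' := by simp [pathGraph_adj]

lemma isWeakHom_pathGraph_clamp (s m : ℕ) :
    IsWeakHom (pathGraph s) (pathGraph (m + 1)) (fun i => Fin.clamp i m) := by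
  intro a b hab
  rw [pathGraph_adj] at hab ⊢
  simp only [Fin.ext_iff, Fin.coe_clamp]
  omega

end SimpleGraph

lemma IsMutualVisibilitySet.image_of_leftInverse {V W : Type*} {G : SimpleGraph V}
    {H : SimpleGraph W} {M : Set V} (hM : IsMutualVisibilitySet G M) (φ : G →g H)
    {r : W → V} (hr : IsWeakHom H G r) (hrφ : Function.LeftInverse r φ) :
    IsMutualVisibilitySet H (φ '' M) := by
  rintro _ ⟨u, hu, rfl⟩ _ ⟨v, hv, rfl⟩
  obtain ⟨p, hpath, hlen, hsupp⟩ := hM u hu v hv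
  refine ⟨p.map φ, hpath.map hrφ.injective, ?_, ?_⟩
  · rw [Walk.length_map, hlen, φ.dist_eq_of_leftInverse hr hrφ]
  · rintro _ hw ⟨m, hm, hmw⟩
    obtain ⟨x, hx, rfl⟩ := List.mem_map.mp ((Walk.support_map φ p) ▸ hw)
    obtain rfl := hrφ.injective hmw
    exact (hsupp m hx hm).imp (congrArg φ) (congrArg φ)

theorem mutualVisibilitySet_mono_path_general (k s t : ℕ) (hk : 2 ≤ k) (hks : k < s)
    (M : Set (Fin k × Fin t))
    (hM : IsMutualVisibilitySet (pathGraph k □ cycleGraph t) M) :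
    IsMutualVisibilitySet (pathGraph s □ cycleGraph t)
      ((fun p : Fin k × Fin t => (Fin.castLE hks.le p.1, p.2)) '' M) := by
  obtain ⟨m, rfl⟩ : ∃ m, k = m + 1 := ⟨k - 1, by omega⟩
  have hclamp : Function.LeftInverse (fun i : Fin s => Fin.clamp i m) (Fin.castLE hks.le) :=
    fun i => Fin.ext (by simp only [Fin.coe_clamp, Fin.val_castLE]; omega)
  exact hM.image_of_leftInverse (Hom.prodMap (pathGraphCastLE hks.le) Hom.id)
    ((isWeakHom_pathGraph_clamp s m).prodMap Hom.id.isWeakHom)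
    (fun x => Prod.ext (hclamp x.1) rfl)

theorem mutualVisibilitySet_mono_path (k s t : ℕ) (ht : 3 ≤ t) (hk : 2 ≤ k) (hks : k < s)
    (M : Set (Fin k × Fin t))
    (hM : IsMutualVisibilitySet (pathGraph k □ cycleGraph t) M) :
    IsMutualVisibilitySet (pathGraph s □ cycleGraph t)
      ((fun p : Fin k × Fin t => (Fin.castLE hks.le p.1, p.2)) '' M) :=
  mutualVisibilitySet_mono_path_general k s t hk hks M hM
end

section
/- For even t ≥ 14, the set M' = {((2i + j(t-8)) mod (t-3), i) : i ∈ {0,...,t-4}, j ∈ {0,1}} is a mutual-visibility set of the Cartesian product P_{t-3} □ C_{t-3} of cardinality 2(t-3). -/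
open SimpleGraph

/-!
Write `n = t - 3`, odd and at least `11`. The set `M'` consists of the vertices `(x, y)` whose
shear `x - 2y` lies in `forbidden n`, i.e. is `≡ 0` or `≡ -5 (mod n)`.

Between `u` and `v` in `M'`, any walk made of `D = |x_u - x_v|` horizontal steps in the direction
`σ = ±1` of `x_v - x_u` and of `d` vertical steps in a direction `ε = ±1` realising the cyclic
distance `d` of the rows is a geodesic, whatever the order of the steps. A horizontal step adds
`σ` to the shear, a vertical one adds `-2ε` modulo `n`; so it is enough to arrange `d` letters
`-2ε` and `D` letters `σ` in a word whose partial sums, started at the shear of `u`, stay out of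
`forbidden n` until the last one. The reflection `z ↦ n - 5 - z`, which preserves `forbidden n`,
reduces to `-2ε = 2`. The start is then `0` or `n - 5`, and as `2d < n` and `D < n` the
displacement `2d ± D` takes only a few values; in each case an explicit word made of a few runs
works, the oddness of `n` letting runs of `2`s jump over forbidden values and the zigzag
`2, -1, -1` marking time.
-/

namespace List

theorem perm_replicate_append_replicate_of_count {α : Type*} [DecidableEq α] {a b : α}
    (hab : a ≠ b) {l : List α} {m k : ℕ} (ha : l.count a = m) (hb : l.count b = k)
    (hl : l.length = m + k) : l ~ replicate m a ++ replicate k b := by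
  refine (Subperm.perm_of_length_le (subperm_ext_iff.mpr fun x hx => ?_) (by simp [hl])).symm
  rcases mem_append.mp hx with h | h <;> obtain rfl := eq_of_mem_replicate h <;>
    simp [count_replicate, hab, hab.symm, ha, hb]

end List

open List

def Avoids (S : Set ℤ) : ℤ → List ℤ → Prop
  | _, [] => True
  | z, x :: l => z + x ∉ S ∧ Avoids S (z + x) l

namespace Avoids

variable {S : Set ℤ}

@[simp] theorem nil (z : ℤ) : Avoids S z [] := trivial

@[simp] theorem cons_iff {z x : ℤ} {l : List ℤ} :
    Avoids S z (x :: l) ↔ z + x ∉ S ∧ Avoids S (z + x) l := Iff.rfl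

@[simp] theorem append_iff {z : ℤ} {l₁ l₂ : List ℤ} :
    Avoids S z (l₁ ++ l₂) ↔ Avoids S z l₁ ∧ Avoids S (z + l₁.sum) l₂ := by
  induction l₁ generalizing z with
  | nil => simp
  | cons x l ih => simp [ih, add_assoc, and_assoc]

@[simp] theorem replicate_iff {z x : ℤ} {k : ℕ} :
    Avoids S z (replicate k x) ↔ ∀ j < k, z + (j + 1) * x ∉ S := by
  induction k generalizing z with
  | zero => simp
  | succ k ih =>
    rw [replicate_succ, cons_iff, ih]
    constructor
    · rintro ⟨h0, h⟩ (_ | j) hj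
      · simpa using h0
      · convert h j (by omega) using 2
        push_cast
        ring
    · intro h
      refine ⟨by simpa using h 0 (by omega), fun j hj => ?_⟩
      convert h (j + 1) (by omega) using 2
      push_cast
      ring

@[simp] theorem flatten_replicate_iff {z : ℤ} {b : List ℤ} (hb : b.sum = 0) {k : ℕ} :
    Avoids S z (replicate k b).flatten ↔ k = 0 ∨ Avoids S z b := by
  induction k with
  | zero => simp
  | succ k ih =>
    rw [replicate_succ, flatten_cons, append_iff, hb, add_zero, ih]
    tauto

theorem map_neg_iff {c z : ℤ} (hS : ∀ y, c - y ∈ S ↔ y ∈ S) {l : List ℤ} :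
    Avoids S z (l.map Neg.neg) ↔ Avoids S (c - z) l := by
  induction l generalizing z with
  | nil => simp
  | cons x l ih =>
    rw [map_cons, cons_iff, cons_iff, ih, ← hS (z + -x)]
    rw [show c - (z + -x) = c - z + x by ring]

theorem dropLast_of_pos {z : ℤ} {w : List ℤ} (hw : ∀ x ∈ w, 0 < x)
    (hS : ∀ y, z < y → y < z + w.sum → y ∉ S) : Avoids S z w.dropLast := by
  induction w generalizing z with
  | nil => trivial
  | cons x l ih =>
    rcases l with _ | ⟨y, l⟩
    · trivial
    · have hx := hw x (by simp)
      have hl : 0 < (y :: l).sum := sum_pos _ (fun a ha => hw a (by simp [ha])) (by simp)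
      refine ⟨hS _ (by omega) (by rw [sum_cons]; omega),
        ih (fun a ha => hw a (by simp [ha])) fun u hzu hu => hS u (by omega) ?_⟩
      rw [sum_cons]
      omega

end Avoids

def HasAvoidingWord (S : Set ℤ) (α β z : ℤ) (d D : ℕ) : Prop :=
  ∃ w : List ℤ, w ~ replicate d α ++ replicate D β ∧ Avoids S z w.dropLast

namespace HasAvoidingWord

variable {S : Set ℤ} {α β z : ℤ} {d D : ℕ}

theorem of_append (w : List ℤ) (x : ℤ) (hαβ : α ≠ β)
    (hcount : (w ++ [x]).count α = d ∧ (w ++ [x]).count β = D ∧ w.length + 1 = d + D)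
    (h : Avoids S z w) : HasAvoidingWord S α β z d D :=
  ⟨w ++ [x], perm_replicate_append_replicate_of_count hαβ hcount.1 hcount.2.1
    (by simpa using hcount.2.2), by rwa [dropLast_concat]⟩

theorem of_pos (hα : 0 < α) (hβ : 0 < β) (hS : ∀ y, z < y → y < z + d * α + D * β → y ∉ S) :
    HasAvoidingWord S α β z d D := by
  refine ⟨replicate d α ++ replicate D β, .refl _, Avoids.dropLast_of_pos (fun x hx => ?_) ?_⟩
  · rcases mem_append.mp hx with h | h <;> rw [eq_of_mem_replicate h] <;> assumption
  · simpa only [sum_append, sum_replicate, nsmul_eq_mul, add_assoc] using hS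

theorem neg {c : ℤ} (hS : ∀ y, c - y ∈ S ↔ y ∈ S) (h : HasAvoidingWord S α β z d D) :
    HasAvoidingWord S (-α) (-β) (c - z) d D := by
  obtain ⟨w, hw, havoid⟩ := h
  refine ⟨w.map Neg.neg, by simpa using hw.map Neg.neg, ?_⟩
  rwa [← map_dropLast, Avoids.map_neg_iff hS, sub_sub_cancel]

end HasAvoidingWord

def forbidden (n : ℕ) : Set ℤ := {z | (n : ℤ) ∣ z ∨ (n : ℤ) ∣ z + 5}

section Forbidden

variable {n : ℕ}

theorem mem_forbidden_congr {a b : ℤ} (h : a ≡ b [ZMOD n]) :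
    a ∈ forbidden n ↔ b ∈ forbidden n := by
  have h5 : a + 5 ≡ b + 5 [ZMOD n] := h.add_right 5
  simp only [forbidden, Set.mem_ofPred_eq, Int.dvd_iff_emod_eq_zero]
  rw [h, h5]

theorem sub_mem_forbidden_iff (y : ℤ) : (n : ℤ) - 5 - y ∈ forbidden n ↔ y ∈ forbidden n := by
  have hsub (b : ℤ) : (n : ℤ) ∣ n - b ↔ (n : ℤ) ∣ b := dvd_sub_right (dvd_refl (n : ℤ))
  change (n : ℤ) ∣ _ ∨ (n : ℤ) ∣ _ ↔ (n : ℤ) ∣ y ∨ (n : ℤ) ∣ y + 5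
  rw [show (n : ℤ) - 5 - y + 5 = n - y by ring, show (n : ℤ) - 5 - y = n - (y + 5) by ring,
    hsub, hsub]
  exact Or.comm

theorem eq_of_mem_forbidden (hn : 5 < n) {z : ℤ} (hlo : -2 * n < z) (hhi : z < 3 * n - 5)
    (h : z ∈ forbidden n) :
    z = -n - 5 ∨ z = -n ∨ z = -5 ∨ z = 0 ∨ z = n - 5 ∨ z = n ∨ z = 2 * n - 5 ∨ z = 2 * n := by
  have hn' : (0 : ℤ) < n := by omega
  obtain ⟨c, hc⟩ | ⟨c, hc⟩ := h
  · have : -2 < c := by nlinarith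
    have : c ≤ 2 := by nlinarith
    interval_cases c <;> omega
  · have : -2 < c := by nlinarith
    have : c ≤ 2 := by nlinarith
    interval_cases c <;> omega

theorem not_mem_forbidden (hn : 5 < n) {z : ℤ} (h : -2 * n < z ∧ z < 3 * n - 5 ∧
    ¬ (z = -n - 5 ∨ z = -n ∨ z = -5 ∨ z = 0 ∨ z = n - 5 ∨ z = n ∨ z = 2 * n - 5 ∨ z = 2 * n)) :
    z ∉ forbidden n :=
  fun hz => h.2.2 (eq_of_mem_forbidden hn h.1 h.2.1 hz)

end Forbidden

section Words

variable {n : ℕ}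

theorem hasAvoidingWord_zigzag (hn : 11 ≤ n) {z : ℤ} (hz : z = 0 ∨ z = n - 5) {d : ℕ}
    (hd : 1 ≤ d) : HasAvoidingWord (forbidden n) 2 (-1) z d (2 * d) := by
  have h5 : 5 < n := by omega
  refine .of_append ([2] ++ (replicate (d - 1) [2, -1, -1]).flatten ++ [-1]) (-1) (by norm_num)
    (by simp [count_flatten]; omega) ?_
  simp
  and_intros <;> (try right) <;> (try and_intros) <;> exact not_mem_forbidden h5 (by omega)

theorem hasAvoidingWord_two_one_zero (hn : 11 ≤ n) (hodd : n % 2 = 1) {d D : ℕ}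
    (hd : 2 * d + 1 ≤ n) (hD : D ≤ n - 1)
    (hT : (2 * d + D : ℤ) = n ∨ (2 * d + D : ℤ) = n - 5 ∨ (2 * d + D : ℤ) = 2 * n - 5) :
    HasAvoidingWord (forbidden n) 2 1 0 d D := by
  have h5 : 5 < n := by omega
  obtain hT | hT | hT := hT
  · obtain hd3 | hd3 : 3 ≤ d ∨ d ≤ 2 := by omega
    · refine .of_append (replicate D 1 ++ replicate (d - 1) 2) 2 (by norm_num)
        (by simp [count_replicate]; omega) ?_
      simp
      and_intros <;> intro j hj <;> exact not_mem_forbidden h5 (by omega)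
    · refine .of_append (replicate (d - 1) 2 ++ replicate (n - 2 * d - 4) 1 ++ [2] ++
        replicate 3 1) 1 (by norm_num) (by simp [count_replicate]; omega) ?_
      simp
      and_intros <;> (try intro j hj) <;> exact not_mem_forbidden h5 (by omega)
  · exact .of_pos (by norm_num) (by norm_num) fun y h0 h1 => not_mem_forbidden h5 (by omega)
  · obtain ⟨k, hk⟩ : ∃ k, n = 2 * k + 3 := ⟨n / 2 - 1, by omega⟩
    refine .of_append ([1] ++ replicate (k - 1) 2 ++ replicate 3 1 ++ replicate (d - k + 1) 2 ++
      replicate (D - 5) 1) 1 (by norm_num) (by simp [count_replicate]; omega) ?_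
    simp
    and_intros <;> (try intro j hj) <;> exact not_mem_forbidden h5 (by omega)

theorem hasAvoidingWord_two_one_sub_five (hn : 11 ≤ n) (hodd : n % 2 = 1) {d D : ℕ}
    (hd : 2 * d + 1 ≤ n) (hD : D ≤ n - 1)
    (hT : (2 * d + D : ℤ) = n ∨ (2 * d + D : ℤ) = 5 ∨ (2 * d + D : ℤ) = n + 5) :
    HasAvoidingWord (forbidden n) 2 1 (n - 5) d D := by
  have h5 : 5 < n := by omega
  obtain hT | hT | hT := hT
  · obtain hd3 | hd3 : 3 ≤ d ∨ d ≤ 2 := by omega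
    · refine .of_append (replicate d 2 ++ replicate (D - 1) 1) 1 (by norm_num)
        (by simp [count_replicate]; omega) ?_
      simp
      and_intros <;> intro j hj <;> exact not_mem_forbidden h5 (by omega)
    · refine .of_append (replicate 4 1 ++ replicate d 2 ++ replicate (D - 5) 1) 1 (by norm_num)
        (by simp [count_replicate]; omega) ?_
      simp
      and_intros <;> (try intro j hj) <;> exact not_mem_forbidden h5 (by omega)
  · exact .of_pos (by norm_num) (by norm_num) fun y h0 h1 => not_mem_forbidden h5 (by omega)
  · obtain hd3 | hd3 : 2 * d + 3 ≤ n ∨ n ≤ 2 * d + 3 := by omega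
    · refine .of_append (replicate 4 1 ++ replicate (d - 1) 2 ++ replicate (n - 3 - 2 * d) 1 ++
        [2] ++ replicate 3 1) 1 (by norm_num) (by simp [count_replicate]; omega) ?_
      simp
      and_intros <;> (try intro j hj) <;> exact not_mem_forbidden h5 (by omega)
    · refine .of_append (replicate 4 1 ++ replicate d 2 ++ replicate (D - 5) 1) 1 (by norm_num)
        (by simp [count_replicate]; omega) ?_
      simp
      and_intros <;> (try intro j hj) <;> exact not_mem_forbidden h5 (by omega)

theorem hasAvoidingWord_two_neg_one_zero (hn : 11 ≤ n) (hodd : n % 2 = 1) {d D : ℕ}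
    (hd : 2 * d + 1 ≤ n) (hdD : 0 < d + D)
    (hT : (2 * d - D : ℤ) = 0 ∨ (2 * d - D : ℤ) = -5 ∨ (2 * d - D : ℤ) = n - 5) :
    HasAvoidingWord (forbidden n) 2 (-1) 0 d D := by
  have h5 : 5 < n := by omega
  obtain hT | hT | hT := hT
  · obtain rfl : D = 2 * d := by omega
    exact hasAvoidingWord_zigzag hn (.inl rfl) (by omega)
  · refine .of_append ([-1] ++ (replicate d [-1, -1, 2]).flatten ++ replicate 3 (-1)) (-1)
      (by norm_num) (by simp [count_flatten]; omega) ?_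
    simp
    and_intros <;> (try right) <;> (try and_intros) <;> exact not_mem_forbidden h5 (by omega)
  · obtain ⟨k, hk⟩ : ∃ k, n = 2 * k + 7 := ⟨n / 2 - 3, by omega⟩
    obtain rfl | hD := Nat.eq_zero_or_pos D
    · refine .of_append (replicate (d - 1) 2) 2 (by norm_num) (by simp [count_replicate]; omega) ?_
      simp
      intro j hj
      exact not_mem_forbidden h5 (by omega)
    · refine .of_append (replicate k 2 ++ [-1] ++ replicate (d - k) 2 ++ replicate (D - 2) (-1))
        (-1) (by norm_num) (by simp [count_replicate]; omega) ?_
      simp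
      and_intros <;> (try intro j hj) <;> exact not_mem_forbidden h5 (by omega)

theorem hasAvoidingWord_two_neg_one_sub_five (hn : 11 ≤ n) {d D : ℕ} (hd : 2 * d + 1 ≤ n)
    (hD : D ≤ n - 1) (hdD : 0 < d + D)
    (hT : (2 * d - D : ℤ) = 0 ∨ (2 * d - D : ℤ) = 5 ∨ (2 * d - D : ℤ) = 5 - n) :
    HasAvoidingWord (forbidden n) 2 (-1) (n - 5) d D := by
  have h5 : 5 < n := by omega
  obtain hT | hT | hT := hT
  · obtain rfl : D = 2 * d := by omega
    exact hasAvoidingWord_zigzag hn (.inr rfl) (by omega)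
  · refine .of_append (replicate d 2 ++ replicate (D - 1) (-1)) (-1) (by norm_num)
      (by simp [count_replicate]; omega) ?_
    simp
    and_intros <;> intro j hj <;> exact not_mem_forbidden h5 (by omega)
  · refine .of_append (replicate (n - 6) (-1) ++ replicate d 2 ++ replicate (2 * d) (-1)) (-1)
      (by norm_num) (by simp [count_replicate]; omega) ?_
    simp
    and_intros <;> intro j hj <;> exact not_mem_forbidden h5 (by omega)

theorem hasAvoidingWord_two (hn : 11 ≤ n) (hodd : n % 2 = 1) {β z : ℤ} (hβ : β = 1 ∨ β = -1)
    (hz : z = 0 ∨ z = n - 5) {d D : ℕ} (hd : 2 * d + 1 ≤ n) (hD : D ≤ n - 1) (hdD : 0 < d + D)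
    (hend : z + 2 * d + β * D ∈ forbidden n) : HasAvoidingWord (forbidden n) 2 β z d D := by
  have hT := eq_of_mem_forbidden (by omega) (by rcases hβ with rfl | rfl <;> omega)
    (by rcases hβ with rfl | rfl <;> omega) hend
  rcases hβ with rfl | rfl <;> rcases hz with rfl | rfl
  · exact hasAvoidingWord_two_one_zero hn hodd hd hD (by omega)
  · exact hasAvoidingWord_two_one_sub_five hn hodd hd hD (by omega)
  · exact hasAvoidingWord_two_neg_one_zero hn hodd hd hdD (by omega)
  · exact hasAvoidingWord_two_neg_one_sub_five hn hd hD hdD (by omega)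

theorem hasAvoidingWord_forbidden (hn : 11 ≤ n) (hodd : n % 2 = 1) {α β z : ℤ}
    (hα : α = 2 ∨ α = -2) (hβ : β = 1 ∨ β = -1) (hz : z ∈ forbidden n) (hz₀ : 0 ≤ z)
    (hzn : z < n) {d D : ℕ} (hd : 2 * d + 1 ≤ n) (hD : D ≤ n - 1)
    (hend : z + α * d + β * D ∈ forbidden n) : HasAvoidingWord (forbidden n) α β z d D := by
  obtain h0 | hdD := Nat.eq_zero_or_pos (d + D)
  · obtain ⟨rfl, rfl⟩ : d = 0 ∧ D = 0 := by omega
    exact ⟨[], by simp, trivial⟩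
  have hz' : z = 0 ∨ z = n - 5 := by
    have := eq_of_mem_forbidden (by omega) (by omega) (by omega) hz
    omega
  rcases hα with rfl | rfl
  · exact hasAvoidingWord_two hn hodd hβ hz' hd hD hdD hend
  · have hend' : n - 5 - z + 2 * d + -β * D ∈ forbidden n := by
      rw [show (n : ℤ) - 5 - z + 2 * d + -β * D = n - 5 - (z + -2 * d + β * D) by ring,
        sub_mem_forbidden_iff]
      exact hend
    simpa using (hasAvoidingWord_two hn hodd (by omega) (by omega) hd hD hdD hend').neg
      (c := n - 5) sub_mem_forbidden_iff

end Words

section Cylinder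

variable {n : ℕ}

theorem cycleGraph_adj_iff_val (hn : 2 ≤ n) {u v : Fin n} :
    (cycleGraph n).Adj u v ↔ u.val + 1 = v.val ∨ v.val + 1 = u.val ∨
      (u.val + 1 = n ∧ v.val = 0) ∨ (v.val + 1 = n ∧ u.val = 0) := by
  obtain ⟨m, rfl⟩ : ∃ m, n = m + 2 := ⟨n - 2, by omega⟩
  have key (a b : Fin (m + 2)) :
      a - b = 1 ↔ b.val + 1 = a.val ∨ (b.val + 1 = m + 2 ∧ a.val = 0) := by
    rw [sub_eq_iff_eq_add', Fin.ext_iff, Fin.val_add, Fin.val_one]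
    have := a.isLt
    rcases (by omega : b.val + 1 < m + 2 ∨ b.val + 1 = m + 2) with h | h
    · rw [Nat.mod_eq_of_lt h]
      omega
    · rw [h, Nat.mod_self]
      omega
  rw [cycleGraph_adj, key, key]
  omega

theorem cycDist_le_cycDist_add_one_of_adj (hn : 2 ≤ n) {y y' : Fin n}
    (h : (cycleGraph n).Adj y y') (w : Fin n) : cycDist n y w ≤ cycDist n y' w + 1 := by
  rw [cycleGraph_adj_iff_val hn] at h
  have := w.isLt
  simp only [cycDist, Nat.dist]
  omega

theorem dist_add_cycDist_le_length (hn : 2 ≤ n) {a b : Fin n × Fin n}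
    (p : (pathGraph n □ cycleGraph n).Walk a b) :
    Nat.dist a.1 b.1 + cycDist n a.2 b.2 ≤ p.length := by
  induction p with
  | nil => simp [Nat.dist, cycDist]
  | @cons u v w h p ih =>
    rw [Walk.length_cons]
    rcases boxProd_adj.mp h with ⟨hp, he⟩ | ⟨hc, he⟩
    · rw [pathGraph_adj] at hp
      rw [← he] at ih
      simp only [Nat.dist] at ih ⊢
      omega
    · have := cycDist_le_cycDist_add_one_of_adj hn hc w.2
      rw [← he] at ih
      omega

theorem exists_sign_dist (a b : Fin n) :
    ∃ σ : ℤ, (σ = 1 ∨ σ = -1) ∧ (b : ℤ) = a + σ * Nat.dist a b := by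
  simp only [Nat.dist]
  rcases le_total (a : ℕ) b with h | h
  · exact ⟨1, .inl rfl, by omega⟩
  · exact ⟨-1, .inr rfl, by omega⟩

theorem exists_sign_cycDist (a b : Fin n) :
    ∃ ε : ℤ, (ε = 1 ∨ ε = -1) ∧ (b : ℤ) ≡ a + ε * cycDist n a b [ZMOD n] := by
  have := a.isLt
  have := b.isLt
  simp only [cycDist, Nat.dist, Int.modEq_iff_dvd]
  rcases le_total (a : ℕ) b with h | h <;>
    rcases le_total (b - a + (a - b) : ℕ) (n - (b - a + (a - b))) with h' | h'
  · exact ⟨1, .inl rfl, 0, by omega⟩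
  · exact ⟨-1, .inr rfl, -1, by omega⟩
  · exact ⟨-1, .inr rfl, 0, by omega⟩
  · exact ⟨1, .inl rfl, 1, by omega⟩

theorem exists_cycleGraph_adj (hn : 2 ≤ n) (y : Fin n) {ε : ℤ} (hε : ε = 1 ∨ ε = -1) :
    ∃ y', (cycleGraph n).Adj y y' ∧ (y' : ℤ) ≡ y + ε [ZMOD n] := by
  have := y.isLt
  simp only [cycleGraph_adj_iff_val hn, Int.modEq_iff_dvd]
  rcases hε with rfl | rfl
  · by_cases h : y.val + 1 < n
    · exact ⟨⟨y + 1, h⟩, by simp, 0, by push_cast; ring⟩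
    · exact ⟨⟨0, by omega⟩, by simp; omega, 1, by push_cast; omega⟩
  · by_cases h : 0 < y.val
    · exact ⟨⟨y - 1, by omega⟩, by simp; omega, 0, by push_cast; omega⟩
    · exact ⟨⟨n - 1, by omega⟩, by simp; omega, -1, by push_cast; omega⟩

theorem exists_pathGraph_adj (x : Fin n) {σ : ℤ} (hσ : σ = 1 ∨ σ = -1) (h₀ : 0 ≤ x + σ)
    (h₁ : x + σ < n) : ∃ x', (pathGraph n).Adj x x' ∧ (x' : ℤ) = x + σ := by
  refine ⟨⟨(x + σ).toNat, by omega⟩, ?_, by simp; omega⟩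
  simp only [pathGraph_adj]
  omega

def shear (p : Fin n × Fin n) : ℤ := p.1 - 2 * p.2

theorem exists_adj_of_count_cons (hn : 2 ≤ n) {ε σ : ℤ} (hε : ε = 1 ∨ ε = -1)
    (hσ : σ = 1 ∨ σ = -1) {x : ℤ} (hx : x = -2 * ε ∨ x = σ) {w : List ℤ} {u v : Fin n × Fin n}
    (hcol : (v.1 : ℤ) = u.1 + σ * (x :: w).count σ)
    (hrow : (v.2 : ℤ) ≡ u.2 + ε * (x :: w).count (-2 * ε) [ZMOD n]) :
    ∃ u', (pathGraph n □ cycleGraph n).Adj u u' ∧ shear u' ≡ shear u + x [ZMOD n] ∧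
      (v.1 : ℤ) = u'.1 + σ * w.count σ ∧ (v.2 : ℤ) ≡ u'.2 + ε * w.count (-2 * ε) [ZMOD n] := by
  have hne : -2 * ε ≠ σ := by rcases hε with rfl | rfl <;> rcases hσ with rfl | rfl <;> norm_num
  rcases hx with hx | hx <;> subst x
  · rw [count_cons_self] at hrow
    rw [count_cons_of_ne hne] at hcol
    obtain ⟨y', hadj, hy'⟩ := exists_cycleGraph_adj hn u.2 hε
    refine ⟨(u.1, y'), boxProd_adj.mpr (.inr ⟨hadj, rfl⟩), ?_, hcol, ?_⟩
    · rw [Int.modEq_iff_dvd,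
        show shear u + -2 * ε - shear (u.1, y') = -2 * (u.2 + ε - y') by unfold shear; ring]
      exact hy'.dvd.mul_left _
    · refine hrow.trans ?_
      rw [Nat.cast_succ, mul_add_one, add_comm (ε * _), ← add_assoc]
      exact hy'.symm.add_right _
  · rw [count_cons_self] at hcol
    rw [count_cons_of_ne hne.symm] at hrow
    have := v.1.isLt
    obtain ⟨x', hadj, hx'⟩ := exists_pathGraph_adj u.1 hσ
      (by rcases hσ with rfl | rfl <;> push_cast at hcol <;> omega)
      (by rcases hσ with rfl | rfl <;> push_cast at hcol <;> omega)
    refine ⟨(x', u.2), boxProd_adj.mpr (.inl ⟨hadj, rfl⟩), ?_, ?_, hrow⟩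
    · rw [show shear (x', u.2) = shear u + σ by unfold shear; rw [hx']; ring]
    · rw [hx']
      push_cast at hcol
      linarith

theorem exists_walk_of_avoids (hn : 2 ≤ n) {ε σ : ℤ} (hε : ε = 1 ∨ ε = -1)
    (hσ : σ = 1 ∨ σ = -1) (w : List ℤ) (hw : ∀ x ∈ w, x = -2 * ε ∨ x = σ)
    {u v : Fin n × Fin n} {z : ℤ} (hcol : (v.1 : ℤ) = u.1 + σ * w.count σ)
    (hrow : (v.2 : ℤ) ≡ u.2 + ε * w.count (-2 * ε) [ZMOD n]) (hz : shear u ≡ z [ZMOD n])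
    (havoid : Avoids (forbidden n) z w.dropLast) :
    ∃ p : (pathGraph n □ cycleGraph n).Walk u v, p.length = w.length ∧
      ∀ x ∈ p.support, shear x ∈ forbidden n → x = u ∨ x = v := by
  induction w generalizing u z with
  | nil =>
    simp only [count_nil, Nat.cast_zero, mul_zero, add_zero] at hcol hrow
    obtain rfl : u = v := Prod.ext (Fin.ext (by omega))
      (Fin.ext ((Int.natCast_modEq_iff.mp hrow).symm.eq_of_lt_of_lt u.2.isLt v.2.isLt))
    exact ⟨.nil, rfl, by simp⟩
  | cons x w ih =>
    obtain ⟨u', hadj, hshear, hcol', hrow'⟩ :=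
      exists_adj_of_count_cons hn hε hσ (hw x (by simp)) hcol hrow
    have hz' : shear u' ≡ z + x [ZMOD n] := hshear.trans (hz.add_right x)
    have havoid' : Avoids (forbidden n) (z + x) w.dropLast := by
      rcases w with _ | ⟨y, w⟩
      · trivial
      · exact havoid.2
    obtain ⟨p, hlen, hp⟩ := ih (fun y hy => hw y (by simp [hy])) hcol' hrow' hz' havoid'
    refine ⟨.cons hadj p, by simp [hlen], fun y hy hyS => ?_⟩
    rw [Walk.support_cons, mem_cons] at hy
    obtain rfl | hy := hy
    · exact .inl rfl
    obtain rfl | rfl := hp y hy hyS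
    · rcases w with _ | ⟨y, w⟩
      · exact .inr (Walk.eq_of_length_eq_zero (by simpa using hlen))
      · exact absurd ((mem_forbidden_congr hz').mp hyS) havoid.1
    · exact .inr rfl

theorem isMutualVisibilitySet_shear_mem_forbidden (hn : 11 ≤ n) (hodd : n % 2 = 1) :
    IsMutualVisibilitySet (pathGraph n □ cycleGraph n) {p | shear p ∈ forbidden n} := by
  intro u hu v hv
  obtain ⟨σ, hσ, hcol⟩ := exists_sign_dist u.1 v.1
  obtain ⟨ε, hε, hrow⟩ := exists_sign_cycDist u.2 v.2
  set D := Nat.dist u.1 v.1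
  set d := cycDist n u.2 v.2
  have hz : shear u % n ≡ shear u [ZMOD n] := Int.mod_modEq _ _
  have hend : shear u % n + -2 * ε * d + σ * D ≡ shear v [ZMOD n] :=
    calc shear u % n + -2 * ε * d + σ * D
      _ ≡ shear u + -2 * ε * d + σ * D [ZMOD n] := (hz.add_right _).add_right _
      _ = v.1 - 2 * (u.2 + ε * d) := by unfold shear; rw [hcol]; ring
      _ ≡ v.1 - 2 * v.2 [ZMOD n] := (hrow.symm.mul_left 2).sub_left _
  obtain ⟨w, hw, havoid⟩ := hasAvoidingWord_forbidden hn hodd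
    (by rcases hε with rfl | rfl <;> norm_num) hσ ((mem_forbidden_congr hz).mpr hu)
    (Int.emod_nonneg _ (by omega)) (Int.emod_lt_of_pos _ (by omega))
    (by simp only [d, cycDist]; omega) (by simp only [D, Nat.dist]; omega)
    ((mem_forbidden_congr hend).mpr hv)
  have hne : -2 * ε ≠ σ := by rcases hε with rfl | rfl <;> rcases hσ with rfl | rfl <;> norm_num
  obtain ⟨hcε, hcσ, hsub⟩ := (perm_replicate_append_replicate hne).mp hw
  obtain ⟨p, hlen, hp⟩ := exists_walk_of_avoids (u := u) (v := v) (by omega) hε hσ w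
    (fun x hx => by simpa using hsub hx) (hcσ ▸ hcol) (hcε ▸ hrow) hz.symm havoid
  have hdist : (pathGraph n □ cycleGraph n).dist u v = w.length := by
    refine le_antisymm (hlen ▸ dist_le p) ?_
    obtain ⟨q, hq⟩ := p.reachable.exists_walk_length_eq_dist
    rw [hw.length_eq, length_append, length_replicate, length_replicate, ← hq]
    have := dist_add_cycDist_le_length (by omega) q
    omega
  exact ⟨p, p.isPath_of_length_eq_dist (hlen.trans hdist.symm), hlen.trans hdist.symm, hp⟩

end Cylinder

theorem Nat.eq_mod_iff_dvd {x a n : ℕ} (hx : x < n) : x = a % n ↔ (n : ℤ) ∣ x - a := by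
  rw [← Nat.modEq_iff_dvd, Nat.ModEq, Nat.mod_eq_of_lt hx, eq_comm]

theorem setOf_eq_shear_mem_forbidden (n k : ℕ) (hn : 0 < n) (hk : k + 5 = n) :
    {p : Fin n × Fin n | ∃ i : Fin n, ∃ j : Fin 2,
      p = (⟨(2 * i.val + j.val * k) % n, Nat.mod_lt _ hn⟩, i)} = {p | shear p ∈ forbidden n} := by
  have hshift (x y : ℕ) : (x : ℤ) - (2 * y + k) = x - 2 * y + 5 - n := by omega
  ext ⟨x, y⟩
  simp only [Set.mem_ofPred_eq, Prod.mk.injEq, Fin.ext_iff, Nat.eq_mod_iff_dvd x.isLt, shear,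
    forbidden]
  constructor
  · rintro ⟨i, j, hx, hy⟩
    rw [← hy] at hx
    fin_cases j
    · left
      simpa using hx
    · right
      simpa [hshift, dvd_sub_self_right] using hx
  · rintro (h | h)
    · exact ⟨y, 0, by simpa using h, rfl⟩
    · exact ⟨y, 1, by simpa [hshift, dvd_sub_self_right] using h, rfl⟩

theorem ncard_setOf (n k : ℕ) (hn : 0 < n) (hk : 0 < k) (hkn : k < n) :
    {p : Fin n × Fin n | ∃ i : Fin n, ∃ j : Fin 2,
      p = (⟨(2 * i.val + j.val * k) % n, Nat.mod_lt _ hn⟩, i)}.ncard = 2 * n := by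
  set f : Fin n × Fin 2 → Fin n × Fin n :=
    fun q => (⟨(2 * q.1.val + q.2.val * k) % n, Nat.mod_lt _ hn⟩, q.1)
  have hf : f.Injective := by
    rintro ⟨i, j⟩ ⟨i', j'⟩ h
    simp only [f, Prod.mk.injEq, Fin.mk.injEq] at h
    obtain ⟨h, rfl⟩ := h
    have hlt (j : Fin 2) : j.val * k < n := by fin_cases j <;> simp <;> omega
    have : j.val * k = j'.val * k :=
      (Nat.ModEq.add_left_cancel' _ h).eq_of_lt_of_lt (hlt j) (hlt j')
    exact Prod.ext rfl (Fin.ext (Nat.eq_of_mul_eq_mul_right hk this))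
  calc _ = (Set.range f).ncard := by
        congr 1
        ext p
        constructor
        · rintro ⟨i, j, rfl⟩
          exact ⟨(i, j), rfl⟩
        · rintro ⟨⟨i, j⟩, rfl⟩
          exact ⟨i, j, rfl⟩
    _ = 2 * n := by
      rw [Set.ncard_range_of_injective hf, Nat.card_prod, Nat.card_fin, Nat.card_fin, mul_comm]

theorem mutualVisibilitySet_even_construction (t : ℕ) (heven : Even t) (ht : 14 ≤ t) :
    IsMutualVisibilitySet (pathGraph (t - 3) □ cycleGraph (t - 3))
      {p : Fin (t - 3) × Fin (t - 3) | ∃ i : Fin (t - 3), ∃ j : Fin 2,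
        p = (⟨(2 * i.val + j.val * (t - 8)) % (t - 3),
              Nat.mod_lt _ (by omega)⟩, i)} ∧
    Set.ncard {p : Fin (t - 3) × Fin (t - 3) | ∃ i : Fin (t - 3), ∃ j : Fin 2,
        p = (⟨(2 * i.val + j.val * (t - 8)) % (t - 3),
              Nat.mod_lt _ (by omega)⟩, i)} = 2 * (t - 3) := by
  refine ⟨?_, ncard_setOf (t - 3) (t - 8) (by omega) (by omega) (by omega)⟩
  rw [setOf_eq_shear_mem_forbidden (t - 3) (t - 8) (by omega) (by omega)]
  exact isMutualVisibilitySet_shear_mem_forbidden (by omega) (by obtain ⟨k, hk⟩ := heven; omega)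
end

section
/- If s ≥ t ≥ 3 are integers, then the mutual-visibility number of the Cartesian product C_s □ C_t satisfies μ(C_s □ C_t) ≤ 3t. -/
open SimpleGraph

/-!
A shortest path between two vertices of the same `C_s`-layer of `C_s □ C_t` never leaves that
layer: its length is the sum of its moves in the two factors, and the `C_s`-moves alone already
cost the distance. Hence every layer of a mutual-visibility set of `C_s □ C_t` is a
mutual-visibility set of `C_s`. A cycle has none with four vertices: if `a < b < c < d`, any
`c,a`-path must leave the arc strictly between `b` and `d`, and it can only do so through `b`
or `d`. So each of the `t` layers contributes at most three vertices.
-/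

namespace SimpleGraph

variable {α β : Type*} {G : SimpleGraph α} {H : SimpleGraph β}

theorem dist_boxProd_mk_right (a₁ a₂ : α) (b : β) :
    (G □ H).dist (a₁, b) (a₂, b) = G.dist a₁ a₂ := by
  simp [dist, edist_boxProd]

namespace Walk

theorem exists_mem_support_of_mem_support_ofBoxProdLeft [DecidableEq β] [DecidableRel G.Adj]
    {x y : α × β} (p : (G □ H).Walk x y) {a : α} (ha : a ∈ p.ofBoxProdLeft.support) :
    ∃ b, (a, b) ∈ p.support := by
  induction p with
  | @nil u => exact ⟨u.2, by simp_all [ofBoxProdLeft]⟩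
  | @cons u v w h p ih =>
    simp only [ofBoxProdLeft, Or.by_cases] at ha
    split_ifs at ha with hG
    · rcases List.mem_cons.mp ha with rfl | ha
      · exact ⟨u.2, by simp⟩
      · obtain ⟨b, hb⟩ := ih ha
        exact ⟨b, by simp [hb]⟩
    · obtain ⟨-, he⟩ := h.resolve_left hG
      obtain ⟨u1, u2⟩ := u
      obtain ⟨v1, v2⟩ := v
      dsimp only at he
      subst he
      obtain ⟨b, hb⟩ := ih ha
      exact ⟨b, by simp [hb]⟩

theorem snd_mem_support_ofBoxProdRight [DecidableEq α] [DecidableRel H.Adj]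
    {x y : α × β} (p : (G □ H).Walk x y) {v : α × β} (hv : v ∈ p.support) :
    v.2 ∈ p.ofBoxProdRight.support := by
  induction p with
  | nil => simp_all [ofBoxProdRight]
  | @cons u w z h p ih =>
    simp only [ofBoxProdRight, Or.by_cases]
    split_ifs with hH
    · rcases List.mem_cons.mp hv with rfl | hv
      · simp
      · simp [ih hv]
    · obtain ⟨-, he⟩ := h.resolve_right hH
      obtain ⟨u1, u2⟩ := u
      obtain ⟨w1, w2⟩ := w
      dsimp only at he
      subst he
      rcases List.mem_cons.mp hv with rfl | hv
      · exact p.ofBoxProdRight.start_mem_support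
      · exact ih hv

variable {a₁ a₂ : α} {b : β} (p : (G □ H).Walk (a₁, b) (a₂, b))

theorem length_ofBoxProdRight_eq_zero_of_length_eq_dist [DecidableEq α] [DecidableRel H.Adj]
    (hp : p.length = (G □ H).dist (a₁, b) (a₂, b)) : p.ofBoxProdRight.length = 0 := by
  classical
  have hleft : G.dist a₁ a₂ ≤ p.ofBoxProdLeft.length := dist_le _
  have := p.length_boxProd
  rw [dist_boxProd_mk_right] at hp
  omega

theorem snd_eq_of_length_eq_dist (hp : p.length = (G □ H).dist (a₁, b) (a₂, b)) {v : α × β}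
    (hv : v ∈ p.support) : v.2 = b := by
  classical
  have hv' := p.snd_mem_support_ofBoxProdRight hv
  rw [(length_eq_zero_iff.mp (p.length_ofBoxProdRight_eq_zero_of_length_eq_dist hp)).eq_nil] at hv'
  simpa using hv'

end Walk

end SimpleGraph

theorem IsMutualVisibilitySet.preimage_boxProdLeft {α β : Type*} {G : SimpleGraph α}
    {H : SimpleGraph β} {M : Set (α × β)} (hM : IsMutualVisibilitySet (G □ H) M) (b : β) :
    IsMutualVisibilitySet G ((·, b) ⁻¹' M) := by
  classical
  intro a₁ ha₁ a₂ ha₂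
  obtain ⟨p, -, hp, havoid⟩ := hM (a₁, b) ha₁ (a₂, b) ha₂
  have hlen : p.ofBoxProdLeft.length = G.dist a₁ a₂ := by
    have := p.length_boxProd
    rw [p.length_ofBoxProdRight_eq_zero_of_length_eq_dist hp] at this
    rw [← dist_boxProd_mk_right a₁ a₂ b, ← hp, this, add_zero]
  refine ⟨p.ofBoxProdLeft, p.ofBoxProdLeft.isPath_of_length_eq_dist hlen, hlen, ?_⟩
  intro a ha haM
  obtain ⟨b', hb'⟩ := p.exists_mem_support_of_mem_support_ofBoxProdLeft ha
  obtain rfl : b' = b := p.snd_eq_of_length_eq_dist hp hb'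
  simpa using havoid _ hb' haM

theorem cycleGraph_adj_val_mem_Icc_of_mem_Ioo {s b d : ℕ} {x y : Fin s}
    (hxy : (cycleGraph s).Adj x y) (hd : d < s) (hy : y.val ∈ Set.Ioo b d) :
    x.val ∈ Set.Icc b d := by
  rcases lt_or_gt_of_ne hxy.ne with hlt | hlt <;>
  · rw [cycleGraph_adj', Fin.coe_sub_iff_lt.mpr hlt, Fin.coe_sub_iff_le.mpr hlt.le] at hxy
    rw [Set.mem_Ioo] at hy
    rw [Set.mem_Icc]
    omega

theorem not_isMutualVisibilitySet_cycleGraph {s : ℕ} {M : Set (Fin s)} {a b c d : Fin s}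
    (hab : a < b) (hbc : b < c) (hcd : c < d) (ha : a ∈ M) (hb : b ∈ M) (hc : c ∈ M)
    (hd : d ∈ M) : ¬ IsMutualVisibilitySet (cycleGraph s) M := by
  intro hM
  obtain ⟨p, -, -, havoid⟩ := hM c hc a ha
  obtain ⟨e, he, hfst, hsnd⟩ := p.exists_boundary_dart {x | x.val ∈ Set.Ioo b.val d.val}
    (by simp [hbc, hcd]) (by simp [hab.le])
  have hIcc := cycleGraph_adj_val_mem_Icc_of_mem_Ioo e.adj.symm d.isLt hfst
  simp only [Set.mem_ofPred_eq, Set.mem_Ioo, Set.mem_Icc] at hfst hsnd hIcc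
  rw [Fin.lt_def] at hab hbc hcd
  have hsndM : e.snd ∈ M := by
    rcases (by omega : e.snd.val = b.val ∨ e.snd.val = d.val) with h | h <;> rwa [Fin.ext h]
  rcases havoid _ (p.dart_snd_mem_support_of_mem_darts he) hsndM with h | h <;>
  · rw [h] at hsnd hIcc
    omega

theorem IsMutualVisibilitySet.ncard_le_three {s : ℕ} {M : Set (Fin s)}
    (hM : IsMutualVisibilitySet (cycleGraph s) M) : M.ncard ≤ 3 := by
  classical
  by_contra! h
  obtain ⟨N, hNM, hN⟩ := M.toFinset.exists_subset_card_eq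
    (show 4 ≤ M.toFinset.card by rw [← Set.ncard_eq_toFinset_card']; omega)
  let f := N.orderEmbOfFin hN
  have hf (i : Fin 4) : f i ∈ M := by simpa using hNM (N.orderEmbOfFin_mem hN i)
  exact not_isMutualVisibilitySet_cycleGraph (f.strictMono (by decide : (0 : Fin 4) < 1))
    (f.strictMono (by decide : (1 : Fin 4) < 2)) (f.strictMono (by decide : (2 : Fin 4) < 3))
    (hf 0) (hf 1) (hf 2) (hf 3) hM

theorem Set.ncard_le_mul_card_of_ncard_preimage_le {α β : Type*} [Fintype β]
    {M : Set (α × β)} {n : ℕ} (h : ∀ b, ((·, b) ⁻¹' M).ncard ≤ n) :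
    M.ncard ≤ n * Fintype.card β := by
  have hM : M = ⋃ b, (·, b) '' ((·, b) ⁻¹' M) := by ext ⟨a, b⟩; simp
  calc M.ncard = (⋃ b, (·, b) '' ((·, b) ⁻¹' M)).ncard := congrArg _ hM
    _ ≤ ∑ b, ((·, b) '' ((·, b) ⁻¹' M)).ncard := Set.ncard_iUnion_le_of_fintype _
    _ = ∑ b, ((·, b) ⁻¹' M).ncard := by
      simp [Set.ncard_image_of_injective _ (Prod.mk_left_injective _)]
    _ ≤ ∑ _b : β, n := Finset.sum_le_sum fun b _ => h b
    _ = n * Fintype.card β := by simp [mul_comm]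

theorem mutualVisibilityNumber_cycleGraph_boxProd_cycleGraph_le_general (s t : ℕ) :
    mutualVisibilityNumber (cycleGraph s □ cycleGraph t) ≤ 3 * t := by
  refine csSup_le' ?_
  rintro _ ⟨M, hM, rfl⟩
  simpa using Set.ncard_le_mul_card_of_ncard_preimage_le
    fun b => (hM.preimage_boxProdLeft b).ncard_le_three

theorem mutualVisibilityNumber_cycleGraph_boxProd_cycleGraph_le (s t : ℕ)
    (hts : t ≤ s) (ht : 3 ≤ t) :
    mutualVisibilityNumber (cycleGraph s □ cycleGraph t) ≤ 3 * t :=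
  mutualVisibilityNumber_cycleGraph_boxProd_cycleGraph_le_general s t
end
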